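/- arXiv:1303.0955 — 7 statements merged into one kernel-verified Lean document; each statement's English description precedes it below -/
import Mathlib

section
/- An ideal J on a countable set has a topological representation if and only if J is dense and countably separated. -/
open Set TopologicalSpace

/-- An ideal of subsets of `α`: closed under subsets and finite unions,
and containing all singletons. -/
def IsIdeal {α : Type*} (J : Set (Set α)) : Prop :=
  (∀ a b : Set α, a ⊆ b → b ∈ J → a ∈ J) ∧
  (∀ a b : Set α, a ∈ J → b ∈ J → a ∪ b ∈ J) ∧
  (∀ x : α, {x} ∈ J)

/-- A σ-ideal on `X`: closed under subsets and countable unions,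
and containing all singletons. -/
def IsSigmaIdeal {X : Type*} (I : Set (Set X)) : Prop :=
  (∀ A B : Set X, A ⊆ B → B ∈ I → A ∈ I) ∧
  (∀ f : ℕ → Set X, (∀ n, f n ∈ I) → (⋃ n, f n) ∈ I) ∧
  (∀ x : X, {x} ∈ I)

/-- `J` has a topological representation: there are a separable metrizable space `X`,
a σ-ideal `I` on `X` containing all singletons, a countable dense set `D ⊆ X`
(the range of the bijection `ρ`) such that `J = {a : cl(ρ(a)) ∈ I}`. -/
def HasTopRep {E : Type*} (J : Set (Set E)) : Prop :=
  ∃ (X : Type) (_t : TopologicalSpace X),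
    MetrizableSpace X ∧ SeparableSpace X ∧
      ∃ I : Set (Set X), IsSigmaIdeal I ∧
        ∃ ρ : E → X, Function.Injective ρ ∧ (Set.range ρ).Countable ∧
          Dense (Set.range ρ) ∧ ∀ a : Set E, a ∈ J ↔ closure (ρ '' a) ∈ I

/-- An ideal is dense if every infinite set contains an infinite set in the ideal. -/
def IdealDense {α : Type*} (J : Set (Set α)) : Prop :=
  ∀ b : Set α, b.Infinite → ∃ a : Set α, a ⊆ b ∧ a.Infinite ∧ a ∈ J

/-- The family `c` separates the ideal `J`: for every `a ∈ J` and `J`-positive `b`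
there is `n` with `a ∩ c n = ∅` and `b ∩ c n ∉ J`. -/
def SeparatesIdeal {α : Type*} (J : Set (Set α)) (c : ℕ → Set α) : Prop :=
  ∀ a ∈ J, ∀ b : Set α, b ∉ J → ∃ n, a ∩ c n = ∅ ∧ b ∩ c n ∉ J

/-- An ideal is countably separated if some countable family separates it. -/
def CtblySeparated {α : Type*} (J : Set (Set α)) : Prop :=
  ∃ c : ℕ → Set α, SeparatesIdeal J c

/-!
A representation `J = {a | closure (ρ '' a) ∈ I}` makes `J` dense because every countable
infinite subset of a metrizable space has an infinite subset with countable closure (the range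
of a sequence converging to a point of its closure outside it, or the set itself if it is
closed). It makes `J` countably separated by the preimages of a countable base: if
`b ∩ ρ⁻¹ U ∈ J` for every basic `U` missing `closure (ρ '' a)`, then `closure (ρ '' b)` is
covered by `closure (ρ '' a)` and countably many closures of such traces, all in `I`.

Conversely, coding each point `d` by the truth values of `d ∈ c n` and `d = d'` embeds the
underlying set densely into a closed subspace `X` of a Cantor space, in which the separating
sets `c n` are traces of clopen sets. For `b ⊆ α`, let `Z b = limSet J ρ b` be the closed set of
points all of whose neighbourhoods have a `J`-positive trace on `b`; it lies in
`closure (ρ '' b)` and, by compactness, is nonempty when `b` is positive. Take for `I` the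
sets that are meagre in every such `Z b`. Baire's theorem in the compact space `Z a` keeps
`closure (ρ '' a)` out of `I` when `a` is positive; separation makes `closure (ρ '' a)` nowhere
dense in every `Z b` when `a ∈ J`; and density together with separation shows that no `Z b` is
a single point, so singletons are nowhere dense in `Z b` as well.
-/

open Filter Topology Function

section Ideal

variable {α : Type*} {J : Set (Set α)}

lemma IsIdeal.mono (hJ : IsIdeal J) {a b : Set α} (hab : a ⊆ b) (hb : b ∈ J) : a ∈ J :=
  hJ.1 a b hab hb

lemma IsIdeal.union_mem (hJ : IsIdeal J) {a b : Set α} (ha : a ∈ J) (hb : b ∈ J) :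
    a ∪ b ∈ J :=
  hJ.2.1 a b ha hb

lemma IsIdeal.singleton_mem (hJ : IsIdeal J) (d : α) : {d} ∈ J :=
  hJ.2.2 d

lemma IsIdeal.biUnion_mem {ι : Type*} (hJ : IsIdeal J) (hemp : ∅ ∈ J) (s : Finset ι)
    {f : ι → Set α} (hf : ∀ i ∈ s, f i ∈ J) : (⋃ i ∈ s, f i) ∈ J := by
  classical
  induction s using Finset.induction_on with
  | empty => simpa using hemp
  | insert i s _ ih =>
    rw [Finset.set_biUnion_insert]
    exact hJ.union_mem (hf i (Finset.mem_insert_self i s))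
      (ih fun j hj => hf j (Finset.mem_insert_of_mem hj))

lemma IsIdeal.finite_mem (hJ : IsIdeal J) (hemp : ∅ ∈ J) {a : Set α} (ha : a.Finite) :
    a ∈ J := by
  simpa using hJ.biUnion_mem hemp ha.toFinset (f := singleton) fun d _ => hJ.singleton_mem d

end Ideal

section SigmaIdeal

variable {X : Type*} {I : Set (Set X)}

lemma IsSigmaIdeal.mono (hI : IsSigmaIdeal I) {A B : Set X} (hAB : A ⊆ B) (hB : B ∈ I) :
    A ∈ I :=
  hI.1 A B hAB hB

lemma IsSigmaIdeal.iUnion_mem {ι : Type*} [Countable ι] (hI : IsSigmaIdeal I) (hemp : ∅ ∈ I)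
    {f : ι → Set X} (hf : ∀ i, f i ∈ I) : (⋃ i, f i) ∈ I := by
  rcases isEmpty_or_nonempty ι with _ | _
  · simpa using hemp
  · obtain ⟨g, hg⟩ := exists_surjective_nat ι
    rw [← hg.iUnion_comp]
    exact hI.2.1 _ fun n => hf (g n)

lemma IsSigmaIdeal.union_mem (hI : IsSigmaIdeal I) {A B : Set X} (hA : A ∈ I) (hB : B ∈ I) :
    A ∪ B ∈ I := by
  rw [union_eq_iUnion]
  exact hI.iUnion_mem (hI.mono (empty_subset A) hA) (Bool.forall_bool.2 ⟨hB, hA⟩)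

lemma IsSigmaIdeal.countable_mem (hI : IsSigmaIdeal I) {A : Set X} (hA : A.Countable)
    (hne : A.Nonempty) : A ∈ I := by
  obtain ⟨x, -⟩ := hne
  have := hA.to_subtype
  rw [← biUnion_of_singleton A, biUnion_eq_iUnion]
  exact hI.iUnion_mem (hI.mono (empty_subset _) (hI.2.2 x)) fun y => hI.2.2 y

end SigmaIdeal

section Topology

variable {X : Type*} [TopologicalSpace X]

lemma exists_seq_tendsto_infinite_range [FrechetUrysohnSpace X] [T1Space X] {S : Set X}
    {x : X} (hx : x ∈ closure (S \ {x})) :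
    ∃ f : ℕ → X, (∀ n, f n ∈ S \ {x}) ∧ Tendsto f atTop (𝓝 x) ∧ (range f).Infinite := by
  obtain ⟨f, hfS, hf⟩ := mem_closure_iff_seq_limit.1 hx
  refine ⟨f, hfS, hf, fun hfin => ?_⟩
  obtain ⟨n, hn⟩ : x ∈ range f :=
    hfin.isClosed.closure_subset (mem_closure_of_tendsto hf (.of_forall mem_range_self))
  exact (hfS n).2 hn

lemma Set.Infinite.exists_subset_infinite_countable_closure [FrechetUrysohnSpace X]
    [T2Space X] {S : Set X} (hS : S.Infinite) (hSc : S.Countable) :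
    ∃ T ⊆ S, T.Infinite ∧ (closure T).Countable := by
  by_cases hcl : IsClosed S
  · exact ⟨S, Subset.rfl, hS, by rwa [hcl.closure_eq]⟩
  obtain ⟨y, hy, hyS⟩ : (closure S \ S).Nonempty :=
    sdiff_nonempty.2 fun h => hcl (closure_subset_iff_isClosed.1 h)
  rw [← sdiff_singleton_eq_self hyS] at hy
  obtain ⟨f, hfS, hf, hinf⟩ := exists_seq_tendsto_infinite_range hy
  refine ⟨range f, range_subset_iff.2 fun n => (hfS n).1, hinf,
    ((countable_range f).insert y).mono ?_⟩
  exact closure_minimal (subset_insert y _) hf.isCompact_insert_range.isClosed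

lemma isMeagre_preimage_val_of_subset_closure_diff {s C : Set X} (hC : IsClosed C)
    (hs : s ⊆ closure (s \ C)) : IsMeagre (((↑) : s → X) ⁻¹' C) := by
  refine residual_of_dense_open (hC.preimage continuous_subtype_val).isOpen_compl ?_
  rwa [Subtype.dense_iff, ← preimage_compl, Subtype.image_preimage_coe, ← sdiff_eq]

end Topology

section Representation

variable {α X : Type*} [TopologicalSpace X] {I : Set (Set X)} {J : Set (Set α)} {ρ : α → X}

lemma idealDense_of_mem_iff_closure_mem [Countable α] [FrechetUrysohnSpace X] [T2Space X]
    (hI : IsSigmaIdeal I) (hρ : Injective ρ) (hJ : ∀ a, a ∈ J ↔ closure (ρ '' a) ∈ I) :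
    IdealDense J := by
  intro b hb
  obtain ⟨T, hTb, hT, hTc⟩ := (hb.image hρ.injOn).exists_subset_infinite_countable_closure
    (b.to_countable.image ρ)
  have hρT : ρ '' (b ∩ ρ ⁻¹' T) = T := by rw [image_inter_preimage, inter_eq_right.2 hTb]
  refine ⟨b ∩ ρ ⁻¹' T, inter_subset_left, .of_image ρ (by rwa [hρT]), ?_⟩
  rw [hJ, hρT]
  exact hI.countable_mem hTc (hT.nonempty.mono subset_closure)

lemma ctblySeparated_of_mem_iff_closure_mem [SecondCountableTopology X] (hI : IsSigmaIdeal I)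
    (hJ : ∀ a, a ∈ J ↔ closure (ρ '' a) ∈ I) : CtblySeparated J := by
  obtain ⟨B, hB⟩ := exists_seq_basis X
  refine ⟨fun n => ρ ⁻¹' B n, fun a ha b hb => ?_⟩
  by_contra! h
  have hA : closure (ρ '' a) ∈ I := (hJ a).1 ha
  have hcover : closure (ρ '' b) ⊆ closure (ρ '' a) ∪
      ⋃ n : {n // a ∩ ρ ⁻¹' B n = ∅}, closure (ρ '' (b ∩ ρ ⁻¹' B n)) := by
    refine fun x hxb => or_iff_not_imp_left.2 fun hxa => ?_
    obtain ⟨_, ⟨n, rfl⟩, hxn, hn⟩ :=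
      hB.exists_subset_of_mem_open hxa isClosed_closure.isOpen_compl
    have hdisj : a ∩ ρ ⁻¹' B n = ∅ := eq_empty_of_forall_notMem fun d hd =>
      hn hd.2 (subset_closure (mem_image_of_mem ρ hd.1))
    refine mem_iUnion.2 ⟨⟨n, hdisj⟩, ?_⟩
    rw [image_inter_preimage, inter_comm]
    exact (hB.isOpen ⟨n, rfl⟩).inter_closure ⟨hxn, hxb⟩
  refine hb ((hJ b).2 (hI.mono hcover (hI.union_mem hA ?_)))
  exact hI.iUnion_mem (hI.mono (empty_subset _) hA) fun n => (hJ _).1 (h n n.2)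

lemma HasTopRep.idealDense [Countable α] (h : HasTopRep J) : IdealDense J := by
  obtain ⟨X, _, _, _, I, hI, ρ, hρ, -, -, hJ⟩ := h
  exact idealDense_of_mem_iff_closure_mem hI hρ hJ

lemma HasTopRep.ctblySeparated (h : HasTopRep J) : CtblySeparated J := by
  obtain ⟨X, _, _, _, I, hI, ρ, -, -, -, hJ⟩ := h
  let := metrizableSpaceMetric X
  exact ctblySeparated_of_mem_iff_closure_mem hI hJ

end Representation

section LimSet

variable {α X : Type*} [TopologicalSpace X]

def limSet (J : Set (Set α)) (ρ : α → X) (b : Set α) : Set X :=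
  {x | ∀ U ∈ 𝓝 x, b ∩ ρ ⁻¹' U ∉ J}

variable {J : Set (Set α)} {ρ : α → X}

lemma isClosed_limSet (b : Set α) : IsClosed (limSet J ρ b) := by
  refine isOpen_compl_iff.1 (isOpen_iff_mem_nhds.2 fun x hx => ?_)
  simp only [limSet, mem_compl_iff, mem_ofPred_eq, not_forall, not_not] at hx
  obtain ⟨U, hU, hUJ⟩ := hx
  filter_upwards [eventually_mem_nhds_iff.2 hU] with y hy using fun hyZ => hyZ U hy hUJ

lemma limSet_mono (hJ : IsIdeal J) {b b' : Set α} (h : b ⊆ b') :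
    limSet J ρ b ⊆ limSet J ρ b' :=
  fun _ hx U hU hUJ => hx U hU (hJ.mono (inter_subset_inter_left _ h) hUJ)

lemma limSet_subset_limSet_diff (hJ : IsIdeal J) {a : Set α} (ha : a ∈ J) (b : Set α) :
    limSet J ρ b ⊆ limSet J ρ (b \ a) := by
  refine fun x hx U hU hUJ => hx U hU (hJ.mono (fun d hd => ?_) (hJ.union_mem hUJ ha))
  by_cases hda : d ∈ a
  · exact Or.inr hda
  · exact Or.inl ⟨⟨hd.1, hda⟩, hd.2⟩

lemma limSet_subset_closure (hemp : ∅ ∈ J) (b : Set α) :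
    limSet J ρ b ⊆ closure (ρ '' b) := by
  refine fun x hx => mem_closure_iff_nhds.2 fun U hU => ?_
  obtain ⟨d, hdb, hdU⟩ : (b ∩ ρ ⁻¹' U).Nonempty :=
    nonempty_iff_ne_empty.2 fun h => hx U hU (h ▸ hemp)
  exact ⟨ρ d, hdU, mem_image_of_mem ρ hdb⟩

lemma limSet_subset_of_isClosed (hemp : ∅ ∈ J) {b : Set α} {C : Set X} (hC : IsClosed C)
    (hb : b ⊆ ρ ⁻¹' C) : limSet J ρ b ⊆ C :=
  (limSet_subset_closure hemp b).trans (closure_minimal (image_subset_iff.2 hb) hC)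

lemma limSet_nonempty [CompactSpace X] (hJ : IsIdeal J) (hemp : ∅ ∈ J) {b : Set α}
    (hb : b ∉ J) : (limSet J ρ b).Nonempty := by
  by_contra! hZ
  have hx : ∀ x, ∃ U ∈ 𝓝 x, b ∩ ρ ⁻¹' U ∈ J := fun x => by
    simpa [limSet] using (hZ ▸ notMem_empty x : x ∉ limSet J ρ b)
  choose U hU hUJ using hx
  obtain ⟨t, ht⟩ := CompactSpace.elim_nhds_subcover U hU
  refine hb (hJ.mono (fun d hd => ?_) (hJ.biUnion_mem hemp t fun x _ => hUJ x))
  obtain ⟨x, hxt, hx⟩ := mem_iUnion₂.1 (ht.symm ▸ mem_univ (ρ d) : ρ d ∈ ⋃ x ∈ t, U x)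
  exact mem_iUnion₂.2 ⟨x, hxt, hd, hx⟩

lemma exists_infinite_subset_tendsto_of_mem_limSet [FrechetUrysohnSpace X] [T1Space X]
    (hJ : IsIdeal J) (hemp : ∅ ∈ J) (hρ : Injective ρ) {b : Set α} {x : X}
    (hx : x ∈ limSet J ρ b) : ∃ e ⊆ b, e.Infinite ∧ ∀ V ∈ 𝓝 x, (e \ ρ ⁻¹' V).Finite := by
  have hx' : x ∈ closure (ρ '' b \ {x}) := by
    rw [← image_sdiff_preimage]
    refine limSet_subset_closure hemp _ (limSet_subset_limSet_diff hJ ?_ b hx)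
    exact hJ.finite_mem hemp (subsingleton_singleton.preimage hρ).finite
  obtain ⟨f, hfS, hf, hinf⟩ := exists_seq_tendsto_infinite_range hx'
  have hρe : ρ '' (b ∩ ρ ⁻¹' range f) = range f := by
    rw [image_inter_preimage, inter_eq_right.2 (range_subset_iff.2 fun n => (hfS n).1)]
  refine ⟨b ∩ ρ ⁻¹' range f, inter_subset_left, .of_image ρ (by rwa [hρe]), fun V hV => ?_⟩
  have hfin : {n | f n ∉ V}.Finite :=
    (Nat.cofinite_eq_atTop ▸ hf hV : ∀ᶠ n in cofinite, f n ∈ V)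
  refine (Finite.preimage hρ.injOn (hfin.image f)).subset ?_
  rintro d ⟨⟨-, n, hn⟩, hdV⟩
  exact ⟨n, by rwa [mem_ofPred_eq, hn], hn⟩

end LimSet

section ClopenSeparation

variable {α X : Type*} [TopologicalSpace X] {J : Set (Set α)} {ρ : α → X} {W : ℕ → Set X}

lemma limSet_nontrivial [CompactSpace X] [FrechetUrysohnSpace X] [T1Space X]
    (hJ : IsIdeal J) (hemp : ∅ ∈ J) (hdense : IdealDense J) (hρ : Injective ρ)
    (hW : ∀ n, IsClopen (W n)) (hsep : SeparatesIdeal J fun n => ρ ⁻¹' W n) {b : Set α}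
    (hb : b ∉ J) : (limSet J ρ b).Nontrivial := by
  obtain ⟨x, hx⟩ := limSet_nonempty (ρ := ρ) hJ hemp hb
  by_contra hnt
  have hZ : limSet J ρ b ⊆ {x} := ((not_nontrivial_iff.1 hnt).eq_singleton_of_mem hx).subset
  obtain ⟨e, -, he, hconv⟩ := exists_infinite_subset_tendsto_of_mem_limSet hJ hemp hρ hx
  obtain ⟨a, hae, ha, haJ⟩ := hdense e he
  obtain ⟨n, han, hbn⟩ := hsep a haJ b hb
  -- the limit point `x` of `e` must lie in `W n`, which `a ⊆ e` avoids
  obtain ⟨y, hy⟩ := limSet_nonempty (ρ := ρ) hJ hemp hbn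
  have hyx : y = x := hZ (limSet_mono hJ inter_subset_left hy)
  have hxW : x ∈ W n :=
    hyx ▸ limSet_subset_of_isClosed hemp (hW n).isClosed inter_subset_right hy
  refine ha ((hconv _ ((hW n).isOpen.mem_nhds hxW)).subset fun d hd => ⟨hae hd, fun hdW => ?_⟩)
  exact (eq_empty_iff_forall_notMem.1 han) d ⟨hd, hdW⟩

lemma limSet_subset_closure_diff [RegularSpace X] (hJ : IsIdeal J) (hemp : ∅ ∈ J)
    {b : Set α} {C : Set X} (hC : ∀ b' ⊆ b, b' ∉ J → (limSet J ρ b' \ C).Nonempty) :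
    limSet J ρ b ⊆ closure (limSet J ρ b \ C) := by
  refine fun x hx => mem_closure_iff_nhds.2 fun V hV => ?_
  obtain ⟨K, hK, hKc, hKV⟩ := exists_mem_nhds_isClosed_subset hV
  obtain ⟨y, hy, hyC⟩ := hC (b ∩ ρ ⁻¹' K) inter_subset_left (hx K hK)
  exact ⟨y, hKV (limSet_subset_of_isClosed hemp hKc inter_subset_right hy),
    limSet_mono hJ inter_subset_left hy, hyC⟩

lemma isMeagre_preimage_val_closure_image [CompactSpace X] [RegularSpace X] (hJ : IsIdeal J)
    (hemp : ∅ ∈ J) (hW : ∀ n, IsClopen (W n)) (hsep : SeparatesIdeal J fun n => ρ ⁻¹' W n)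
    {a : Set α} (ha : a ∈ J) (b : Set α) :
    IsMeagre (((↑) : limSet J ρ b → X) ⁻¹' closure (ρ '' a)) := by
  refine isMeagre_preimage_val_of_subset_closure_diff isClosed_closure
    (limSet_subset_closure_diff hJ hemp fun b' _ hb' => ?_)
  obtain ⟨n, han, hbn⟩ := hsep a ha b' hb'
  obtain ⟨y, hy⟩ := limSet_nonempty (ρ := ρ) hJ hemp hbn
  have hyW : y ∈ W n := limSet_subset_of_isClosed hemp (hW n).isClosed inter_subset_right hy
  have hdisj : Disjoint (ρ '' a) (W n) := by
    rw [disjoint_iff_inter_eq_empty, ← image_inter_preimage, han, image_empty]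
  exact ⟨y, limSet_mono hJ inter_subset_left hy,
    (hdisj.closure_left (hW n).isOpen).notMem_of_mem_right hyW⟩

lemma isMeagre_preimage_val_singleton [CompactSpace X] [FrechetUrysohnSpace X]
    [RegularSpace X] [T1Space X] (hJ : IsIdeal J) (hemp : ∅ ∈ J) (hdense : IdealDense J)
    (hρ : Injective ρ) (hW : ∀ n, IsClopen (W n))
    (hsep : SeparatesIdeal J fun n => ρ ⁻¹' W n) (b : Set α) (x : X) :
    IsMeagre (((↑) : limSet J ρ b → X) ⁻¹' {x}) :=
  isMeagre_preimage_val_of_subset_closure_diff isClosed_singleton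
    (limSet_subset_closure_diff hJ hemp fun _ _ hb' =>
      (limSet_nontrivial hJ hemp hdense hρ hW hsep hb').exists_ne x)

lemma not_isMeagre_univ_limSet [CompactSpace X] [T2Space X] (hJ : IsIdeal J) (hemp : ∅ ∈ J)
    {b : Set α} (hb : b ∉ J) : ¬ IsMeagre (univ : Set (limSet J ρ b)) := by
  have := isCompact_iff_compactSpace.1 (isClosed_limSet (J := J) (ρ := ρ) b).isCompact
  obtain ⟨x, hx⟩ := limSet_nonempty (ρ := ρ) hJ hemp hb
  exact not_isMeagre_of_isOpen isOpen_univ ⟨⟨x, hx⟩, mem_univ _⟩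

end ClopenSeparation

theorem hasTopRep_of_separatesIdeal_clopen {α : Type*} [Countable α] {X : Type}
    [TopologicalSpace X] [CompactSpace X] [MetrizableSpace X] {J : Set (Set α)}
    (hJ : IsIdeal J) (hemp : ∅ ∈ J) (hdense : IdealDense J) {ρ : α → X} (hρ : Injective ρ)
    (hρd : DenseRange ρ) {W : ℕ → Set X} (hW : ∀ n, IsClopen (W n))
    (hsep : SeparatesIdeal J fun n => ρ ⁻¹' W n) : HasTopRep J := by
  refine ⟨X, inferInstance, inferInstance, ⟨range ρ, countable_range ρ, hρd⟩,
    {A | ∀ b ∉ J, IsMeagre (((↑) : limSet J ρ b → X) ⁻¹' A)}, ⟨?_, ?_, ?_⟩,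
    ρ, hρ, countable_range ρ, hρd, fun a => ⟨?_, fun h => ?_⟩⟩
  · exact fun A B hAB hB b hb => (hB b hb).mono (preimage_mono hAB)
  · intro f hf b hb
    rw [preimage_iUnion]
    exact isMeagre_iUnion fun n => hf n b hb
  · exact fun x b _ => isMeagre_preimage_val_singleton hJ hemp hdense hρ hW hsep b x
  · exact fun ha b _ => isMeagre_preimage_val_closure_image hJ hemp hW hsep ha b
  · by_contra ha
    exact not_isMeagre_univ_limSet hJ hemp ha
      ((h a ha).mono fun z _ => mem_preimage.2 (limSet_subset_closure hemp a z.2))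

open Classical in
noncomputable def setCode {ι α : Type*} (s : ι → Set α) (d : α) : ι → Bool :=
  fun i => decide (d ∈ s i)

@[simp]
lemma setCode_eq_true {ι α : Type*} {s : ι → Set α} {d : α} {i : ι} :
    setCode s d i = true ↔ d ∈ s i := by
  simp [setCode]

theorem exists_injective_denseRange_clopen_preimage_eq {α : Type} [Countable α]
    (c : ℕ → Set α) :
    ∃ (X : Type) (_ : TopologicalSpace X) (_ : CompactSpace X) (_ : MetrizableSpace X)
      (ρ : α → X) (W : ℕ → Set X),
      Injective ρ ∧ DenseRange ρ ∧ (∀ n, IsClopen (W n)) ∧ ∀ n, ρ ⁻¹' W n = c n := by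
  let s : ℕ ⊕ α → Set α := Sum.elim c fun d => {d}
  let X := closure (range (setCode s))
  have : CompactSpace X := isCompact_iff_compactSpace.1 isClosed_closure.isCompact
  refine ⟨X, inferInstance, this, inferInstance,
    fun d => ⟨setCode s d, subset_closure (mem_range_self d)⟩,
    fun n => {y | y.1 (.inl n) = true}, fun d d' h => ?_, ?_, fun n => ?_, fun n => ?_⟩
  · have hd' : setCode s d' (.inr d') = true := setCode_eq_true.2 (mem_singleton d')
    exact setCode_eq_true.1 ((congrFun (congrArg Subtype.val h) (.inr d')).trans hd')
  · rw [DenseRange, Subtype.dense_iff, ← range_comp]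
    exact Subset.rfl
  · exact (isClopen_discrete {true}).preimage
      ((continuous_apply _).comp continuous_subtype_val)
  · ext d
    simp [s]

lemma hasTopRep_of_empty_notMem {α : Type*} {J : Set (Set α)} (hJ : IsIdeal J)
    (hemp : ∅ ∉ J) : HasTopRep J := by
  have : IsEmpty α := ⟨fun d => hemp (hJ.mono (empty_subset {d}) (hJ.singleton_mem d))⟩
  refine ⟨Empty, inferInstance, inferInstance, inferInstance, ∅,
    ⟨fun _ _ _ h => h, fun _ hf => hf 0, fun x => x.elim⟩, isEmptyElim, fun d => isEmptyElim d,
    countable_range _, fun x => x.elim, fun a => ?_⟩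
  simp [eq_empty_of_isEmpty a, hemp]

theorem hasTopRep_of_idealDense_of_ctblySeparated {α : Type} [Countable α]
    {J : Set (Set α)} (hJ : IsIdeal J) (hdense : IdealDense J) (hsep : CtblySeparated J) :
    HasTopRep J := by
  by_cases hemp : ∅ ∈ J
  · obtain ⟨c, hc⟩ := hsep
    obtain ⟨X, _, _, _, ρ, W, hρ, hρd, hW, hWc⟩ :=
      exists_injective_denseRange_clopen_preimage_eq c
    refine hasTopRep_of_separatesIdeal_clopen hJ hemp hdense hρ hρd hW ?_
    simpa only [hWc] using hc
  · exact hasTopRep_of_empty_notMem hJ hemp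

/-- Theorem 1 (main characterization): an ideal on a countable set has a topological
representation if and only if it is dense and countably separated. -/
theorem ideal_hasTopRep_iff_dense_and_ctblySeparated
    {α : Type} [Countable α] (J : Set (Set α)) (hJ : IsIdeal J) :
    HasTopRep J ↔ (IdealDense J ∧ CtblySeparated J) :=
  ⟨fun h => ⟨h.idealDense, h.ctblySeparated⟩,
    fun h => hasTopRep_of_idealDense_of_ctblySeparated hJ h.1 h.2⟩
end

section
/- If J and K are ideals on ω with J ≤_RB K and K is countably separated, then J is countably separated. -/
open Set TopologicalSpace

/-- `J ≤_RB K`: there is a finite-to-one `f : ω → ω` with `a ∈ J ↔ f ⁻¹' a ∈ K`. -/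
def RBle (J K : Set (Set ℕ)) : Prop :=
  ∃ f : ℕ → ℕ, (∀ n : ℕ, (f ⁻¹' {n}).Finite) ∧ ∀ a : Set ℕ, a ∈ J ↔ f ⁻¹' a ∈ K

theorem SeparatesIdeal.image {α β : Type*} {J : Set (Set β)} {K : Set (Set α)} {f : α → β}
    {c : ℕ → Set α} (hK : ∀ a b : Set α, a ⊆ b → b ∈ K → a ∈ K)
    (hf : ∀ a : Set β, a ∈ J ↔ f ⁻¹' a ∈ K) (hc : SeparatesIdeal K c) :
    SeparatesIdeal J fun n => f '' c n := by
  intro a ha b hb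
  obtain ⟨n, hdisj, hpos⟩ := hc (f ⁻¹' a) ((hf a).1 ha) (f ⁻¹' b) (mt (hf b).2 hb)
  refine ⟨n, ?_, fun h => hpos (hK _ _ ?_ ((hf _).1 h))⟩
  · -- `a ∩ f '' c n = f '' (c n ∩ f ⁻¹' a)`
    rw [inter_comm, ← image_inter_preimage, inter_comm, hdisj, image_empty]
  · rw [preimage_inter]
    exact inter_subset_inter_right _ (subset_preimage_image f _)

theorem ctblySeparated_of_RBle_general
    (J K : Set (Set ℕ)) (hK : IsIdeal K)
    (hRB : RBle J K) (hsep : CtblySeparated K) :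
    CtblySeparated J := by
  obtain ⟨f, -, hf⟩ := hRB
  obtain ⟨c, hc⟩ := hsep
  exact ⟨_, hc.image hK.1 hf⟩

/-- If `J ≤_RB K` and `K` is countably separated, then `J` is countably separated. -/
theorem ctblySeparated_of_RBle
    (J K : Set (Set ℕ)) (hJ : IsIdeal J) (hK : IsIdeal K)
    (hRB : RBle J K) (hsep : CtblySeparated K) :
    CtblySeparated J :=
  ctblySeparated_of_RBle_general J K hK hRB hsep
end

section
/- Let I be a σ-ideal containing all singletons on a separable metric space X, and let D and E be two countable dense subsets of X. Then the ideals J = {a ⊆ D : cl(a) ∈ I} and K = {a ⊆ E : cl(a) ∈ I} are isomorphic: there is a bijection f : D → E such that for every a ⊆ D, a ∈ J if and only if f(a) ∈ K. -/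
/-!
Enumerate `E` and match its points one by one with fresh points of `D`: the `n`-th point goes to a
point of `D` within `2⁻¹ ^ n` of it, or, if it was itself already taken as a match, within
`2⁻¹ ^ n` of the anchor of the step that took it. Non-isolated points have infinitely many points
of `D` nearby and isolated points lie in `D`, so this never gets stuck, and it yields injections
`E → D` and `D → E` that move all but finitely many points by less than any `ε > 0`. The
Schröder–Bernstein bijection `f : D ≃ E` assembled from them inherits this property, which forces
`cl(f(a)) ⊆ cl(a) ∪ f(a)` and `cl(a) ⊆ cl(f(a)) ∪ a`. As `I` is a σ-ideal containing the
singletons, it contains one closure if and only if it contains the other.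
-/

open Set TopologicalSpace

open Filter Topology Metric Function

theorem exists_seq_of_forall_exists_next {β : Type*}
    (Step : (n : ℕ) → ((m : ℕ) → m < n → β) → β → Prop)
    (h : ∀ n (hist : (m : ℕ) → m < n → β),
      (∀ m (hm : m < n), Step m (fun k hk => hist k (hk.trans hm)) (hist m hm)) →
        ∃ b, Step n hist b) :
    ∃ f : ℕ → β, ∀ n, Step n (fun m _ => f m) (f n) := by
  classical
  have : Nonempty β :=
    ⟨(h 0 (fun m hm => absurd hm m.not_lt_zero) fun m hm => absurd hm m.not_lt_zero).choose⟩
  let f : ℕ → β := Nat.strongRec fun n hist =>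
    if hs : ∃ b, Step n hist b then hs.choose else Classical.arbitrary β
  refine ⟨f, fun n => ?_⟩
  induction n using Nat.strong_induction_on with
  | _ n ih =>
    have hs := h n (fun m _ => f m) ih
    rw [show f n = _ from Nat.strongRec_eq _ n, dif_pos hs]
    exact hs.choose_spec

theorem Dense.inter_infinite_of_mem_nhds {X : Type*} [TopologicalSpace X] [T1Space X]
    {D U : Set X} (hD : Dense D) {a : X} [NeBot (𝓝[≠] a)] (hU : U ∈ 𝓝 a) :
    (D ∩ U).Infinite := by
  intro hfin
  obtain ⟨V, hVU, hVo, haV⟩ := mem_nhds_iff.1 hU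
  have hF : ((D \ {a}) ∩ U).Finite := hfin.subset (inter_subset_inter_left _ sdiff_subset)
  obtain ⟨z, hzD, hzV, hzF⟩ := (hD.sdiff_singleton a).exists_mem_open
    (hVo.sdiff hF.isClosed) ⟨a, haV, fun h => h.1.2 rfl⟩
  exact hzF ⟨hzD, hVU hzV⟩

theorem Dense.mem_of_isOpen_singleton {X : Type*} [TopologicalSpace X] {D : Set X}
    (hD : Dense D) {x : X} (hx : IsOpen ({x} : Set X)) : x ∈ D := by
  obtain ⟨y, hyD, rfl⟩ := hD.exists_mem_open hx (singleton_nonempty x)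
  exact hyD

section Greedy

variable {X : Type*} [MetricSpace X] {D : Set X}

/-- Step `n` of the greedy matching of the points `e n` with points of `D`: given the pairs
`hist m` chosen at the earlier steps, `e n` is matched with a fresh `p.1 ∈ D` close to the anchor
`p.2`. The anchor is `e n` itself unless `e n` was already taken as an earlier match, in which case
the anchor of that step is inherited. Anchors of matches other than `e n` are not isolated, so
fresh points of `D` remain available near them. -/
structure GreedyStep (D : Set X) (e : ℕ → X) (n : ℕ) (hist : (m : ℕ) → m < n → X × X)
    (p : X × X) : Prop where
  mem : p.1 ∈ D
  fresh : ∀ m hm, (hist m hm).1 ≠ p.1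
  dist_lt : dist p.1 p.2 < 2⁻¹ ^ n
  eq_or_not_isolated : p.1 = e n ∨ ¬IsOpen ({p.2} : Set X)
  anchor : p.2 = e n ∨ ∃ m hm, (hist m hm).1 = e n ∧ p.2 = (hist m hm).2

theorem Dense.exists_greedyStep (hD : Dense D) {e : ℕ → X} (he : Injective e) (n : ℕ)
    (hist : (m : ℕ) → m < n → X × X)
    (hhist : ∀ m (hm : m < n), GreedyStep D e m (fun k hk => hist k (hk.trans hm)) (hist m hm)) :
    ∃ p, GreedyStep D e n hist p := by
  have fresh : ∀ a, ¬IsOpen ({a} : Set X) →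
      ∃ v ∈ D, (∀ m hm, (hist m hm).1 ≠ v) ∧ dist v a < 2⁻¹ ^ n := by
    intro a ha
    have : NeBot (𝓝[≠] a) := ⟨by rwa [Ne, ← isOpen_singleton_iff_punctured_nhds]⟩
    have hpool :=
      hD.inter_infinite_of_mem_nhds (ball_mem_nhds a (by positivity : (0 : ℝ) < 2⁻¹ ^ n))
    obtain ⟨v, ⟨hvD, hva⟩, hvU⟩ :=
      (hpool.sdiff (finite_range fun i : Fin n => (hist i i.2).1)).nonempty
    exact ⟨v, hvD, fun m hm h => hvU ⟨⟨m, hm⟩, h⟩, hva⟩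
  by_cases hused : ∃ m hm, (hist m hm).1 = e n
  · obtain ⟨m, hm, hme⟩ := hused
    have ha : ¬IsOpen ({(hist m hm).2} : Set X) := by
      refine (hhist m hm).eq_or_not_isolated.resolve_left fun h => hm.ne (he ?_)
      rw [← h, hme]
    obtain ⟨v, hvD, hvf, hva⟩ := fresh _ ha
    exact ⟨(v, (hist m hm).2), hvD, hvf, hva, Or.inr ha, Or.inr ⟨m, hm, hme, rfl⟩⟩
  · push Not at hused
    by_cases heD : e n ∈ D
    · exact ⟨(e n, e n), heD, hused, by simp, Or.inl rfl, Or.inl rfl⟩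
    · have ha : ¬IsOpen ({e n} : Set X) := fun h => heD (hD.mem_of_isOpen_singleton h)
      obtain ⟨v, hvD, hvf, hva⟩ := fresh _ ha
      exact ⟨(v, e n), hvD, hvf, hva, Or.inr ha, Or.inl rfl⟩

theorem GreedyStep.exists_dist_lt {e : ℕ → X} {p : ℕ → X × X}
    (hp : ∀ n, GreedyStep D e n (fun m _ => p m) (p n)) (n : ℕ) :
    ∃ m, (m = n ∨ (p m).1 = e n) ∧ dist (e n) (p n).1 < 2 * 2⁻¹ ^ m := by
  have hn := (hp n).dist_lt
  rcases (hp n).anchor with ha | ⟨m, hm, hme, ha⟩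
  · refine ⟨n, Or.inl rfl, ?_⟩
    rw [← ha, dist_comm]
    linarith [pow_pos (by norm_num : (0 : ℝ) < 2⁻¹) n]
  · refine ⟨m, Or.inr hme, ?_⟩
    have hm' := (hp m).dist_lt
    have hmn : (2⁻¹ : ℝ) ^ n ≤ 2⁻¹ ^ m := pow_le_pow_of_le_one (by norm_num) (by norm_num) hm.le
    calc dist (e n) (p n).1 ≤ dist (p m).1 (p m).2 + dist (p n).1 (p n).2 := by
          rw [← hme, dist_comm (p n).1, ← ha]; exact dist_triangle _ _ _
      _ < 2 * 2⁻¹ ^ m := by linarith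

theorem Dense.exists_injective_tendsto_dist (hD : Dense D) {e : ℕ → X} (he : Injective e) :
    ∃ v : ℕ → X, Injective v ∧ (∀ n, v n ∈ D) ∧
      Tendsto (fun n => dist (e n) (v n)) cofinite (𝓝 0) := by
  obtain ⟨p, hp⟩ := exists_seq_of_forall_exists_next (GreedyStep D e) (hD.exists_greedyStep he)
  refine ⟨fun n => (p n).1, fun m n hmn => ?_, fun n => (hp n).mem, ?_⟩
  · by_contra hne
    rcases lt_or_gt_of_ne hne with h | h
    exacts [(hp n).fresh m h hmn, (hp m).fresh n h hmn.symm]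
  rw [Metric.tendsto_nhds]
  intro ε hε
  simp only [Real.dist_eq, sub_zero, abs_of_nonneg dist_nonneg, eventually_cofinite, not_lt]
  have hgeom : Tendsto (fun m : ℕ => 2 * (2⁻¹ : ℝ) ^ m) cofinite (𝓝 0) := by
    rw [Nat.cofinite_eq_atTop]
    simpa using (tendsto_pow_atTop_nhds_zero_of_lt_one (r := (2⁻¹ : ℝ)) (by norm_num)
      (by norm_num)).const_mul 2
  have hN : {m : ℕ | ε ≤ 2 * (2⁻¹ : ℝ) ^ m}.Finite := by
    simpa only [not_lt] using eventually_cofinite.1 (hgeom.eventually (gt_mem_nhds hε))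
  refine (hN.union ((hN.image fun m => (p m).1).preimage he.injOn)).subset fun n hn => ?_
  obtain ⟨m, hm | hm, hd⟩ := GreedyStep.exists_dist_lt hp n
  · subst hm
    exact Or.inl (hn.trans hd.le)
  · exact Or.inr ⟨m, hn.trans hd.le, hm⟩

end Greedy

section Transfer

variable {X : Type*} [MetricSpace X]

theorem Dense.exists_injective_subtype_tendsto_dist {D E : Set X} (hD : Dense D)
    (hEc : E.Countable) (hEi : E.Infinite) :
    ∃ s : E → D, Injective s ∧ Tendsto (fun y : E => dist (y : X) (s y)) cofinite (𝓝 0) := by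
  have := hEc.to_subtype
  have := hEi.to_subtype
  obtain ⟨_⟩ := nonempty_denumerable E
  let φ : ℕ ≃ E := (Denumerable.eqv E).symm
  obtain ⟨v, hv, hvD, hlim⟩ :=
    hD.exists_injective_tendsto_dist (e := fun n => (φ n : X))
      (Subtype.val_injective.comp φ.injective)
  refine ⟨fun y => ⟨v (φ.symm y), hvD _⟩,
    fun y y' h => φ.symm.injective (hv (congrArg Subtype.val h)), ?_⟩
  simpa [comp_def] using hlim.comp φ.symm.injective.tendsto_cofinite

theorem exists_equiv_tendsto_dist {D E : Set X} (hDc : D.Countable) (hDd : Dense D)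
    (hEc : E.Countable) (hEd : Dense E) :
    ∃ f : D ≃ E, Tendsto (fun x : D => dist (x : X) (f x)) cofinite (𝓝 0) := by
  rcases D.finite_or_infinite with hD | hD
  · have hDu : D = univ := by rw [← hD.isClosed.closure_eq, hDd.closure_eq]
    have : Finite X := finite_univ_iff.1 (hDu ▸ hD)
    obtain rfl : D = E := by rw [hDu, ← E.toFinite.isClosed.closure_eq, hEd.closure_eq]
    exact ⟨Equiv.refl D, by simp⟩
  have hE : E.Infinite := fun hE => hD (hE.subset (by
    rw [← hE.isClosed.closure_eq, hEd.closure_eq]; exact subset_univ D))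
  obtain ⟨t, ht, htd⟩ := hEd.exists_injective_subtype_tendsto_dist hDc hD
  obtain ⟨s, hs, hsd⟩ := hDd.exists_injective_subtype_tendsto_dist hEc hE
  obtain ⟨h, hbij, hR⟩ := Function.Embedding.schroeder_bernstein_of_rel ht hs
    (fun x y => y = t x ∨ s y = x) (fun _ => Or.inl rfl) (fun _ => Or.inr rfl)
  refine ⟨Equiv.ofBijective h hbij, squeeze_zero (fun _ => dist_nonneg) (fun x => ?_)
    (by simpa using htd.max (hsd.comp hbij.1.tendsto_cofinite))⟩
  rcases hR x with hx | hx
  · exact (congrArg _ (congrArg Subtype.val hx)).trans_le (le_max_left _ _)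
  · calc dist (x : X) (h x) = dist (h x : X) (s (h x)) := by rw [hx, dist_comm]
      _ ≤ _ := le_max_right _ _

theorem closure_image_subset_closure_image_union {ι : Type*} {φ ψ : ι → X}
    (h : Tendsto (fun i => dist (φ i) (ψ i)) cofinite (𝓝 0)) (a : Set ι) :
    closure (ψ '' a) ⊆ closure (φ '' a) ∪ ψ '' a := by
  intro y hy
  refine or_iff_not_imp_right.2 fun hya => ?_
  set L := comap ψ (𝓝 y) ⊓ 𝓟 a
  have hL : L.NeBot := by
    refine inf_principal_neBot_iff.2 fun U hU => ?_
    obtain ⟨t, ht, htU⟩ := mem_comap.1 hU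
    obtain ⟨_, hzt, x, hx, rfl⟩ := mem_closure_iff_nhds.1 hy t ht
    exact ⟨x, htU hzt, hx⟩
  -- as `y ∉ ψ '' a`, a neighbourhood of `y` misses the finitely many `ψ x` with `x ∈ a \ F`
  have hLc : L ≤ cofinite := by
    intro F hF
    have hfin : (ψ '' (Fᶜ ∩ a)).Finite := (hF.subset inter_subset_left).image ψ
    refine mem_inf_of_inter (preimage_mem_comap (hfin.isClosed.isOpen_compl.mem_nhds ?_))
      (mem_principal_self a) ?_
    · exact fun hy' => hya (image_mono inter_subset_right hy')
    · rintro x ⟨hx, hxa⟩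
      by_contra hxF
      exact hx ⟨x, ⟨hxF, hxa⟩, rfl⟩
  have hψ : Tendsto ψ L (𝓝 y) := tendsto_comap.mono_left inf_le_left
  have hφ : Tendsto φ L (𝓝 y) := hψ.congr_dist (by simpa only [dist_comm] using h.mono_left hLc)
  exact mem_closure_of_tendsto hφ
    (mem_of_superset (mem_inf_of_right (mem_principal_self a)) fun x hx => mem_image_of_mem φ hx)

end Transfer

namespace IsSigmaIdeal

variable {X : Type*} {I : Set (Set X)}

theorem sUnion_mem (hI : IsSigmaIdeal I) {S : Set (Set X)} (hS : S.Countable) (hne : S.Nonempty)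
    (h : ∀ s ∈ S, s ∈ I) : ⋃₀ S ∈ I := by
  obtain ⟨f, rfl⟩ := hS.exists_eq_range hne
  rw [sUnion_range]
  exact hI.2.1 f fun n => h _ (mem_range_self n)

theorem union_mem_of_countable (hI : IsSigmaIdeal I) {A B : Set X} (hA : A ∈ I)
    (hB : B.Countable) : A ∪ B ∈ I := by
  have := hI.sUnion_mem ((hB.image singleton).insert A) (insert_nonempty _ _) ?_
  · simpa [sUnion_insert, sUnion_image] using this
  · rintro s (rfl | ⟨x, -, rfl⟩)
    exacts [hA, hI.2.2 x]

theorem closure_image_mem [MetricSpace X] (hI : IsSigmaIdeal I) {ι : Type*} [Countable ι]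
    {φ ψ : ι → X} (h : Tendsto (fun i => dist (φ i) (ψ i)) cofinite (𝓝 0)) {a : Set ι}
    (ha : closure (φ '' a) ∈ I) : closure (ψ '' a) ∈ I :=
  hI.1 _ _ (closure_image_subset_closure_image_union h a)
    (hI.union_mem_of_countable ha (a.to_countable.image ψ))

end IsSigmaIdeal

theorem topRep_independent_of_denseSet_general
    {X : Type} [MetricSpace X]
    (I : Set (Set X)) (hI : IsSigmaIdeal I)
    (D E : Set X) (hDc : D.Countable) (hDd : Dense D)
    (hEc : E.Countable) (hEd : Dense E) :
    ∃ f : D ≃ E, ∀ a : Set D,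
      closure (Subtype.val '' a) ∈ I ↔ closure (Subtype.val '' (⇑f '' a)) ∈ I := by
  obtain ⟨f, hf⟩ := exists_equiv_tendsto_dist hDc hDd hEc hEd
  have := hDc.to_subtype
  refine ⟨f, fun a => ?_⟩
  rw [image_image]
  exact ⟨hI.closure_image_mem hf, hI.closure_image_mem (by simpa only [dist_comm] using hf)⟩

/-- Independence of the choice of the dense set: the ideals
`{a ⊆ D : cl(a) ∈ I}` and `{a ⊆ E : cl(a) ∈ I}` are isomorphic. -/
theorem topRep_independent_of_denseSet
    {X : Type} [MetricSpace X] [SeparableSpace X]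
    (I : Set (Set X)) (hI : IsSigmaIdeal I)
    (D E : Set X) (hDc : D.Countable) (hDd : Dense D)
    (hEc : E.Countable) (hEd : Dense E) :
    ∃ f : D ≃ E, ∀ a : Set D,
      closure (Subtype.val '' a) ∈ I ↔ closure (Subtype.val '' (⇑f '' a)) ∈ I :=
  topRep_independent_of_denseSet_general I hI D E hDc hDd hEc hEd
end

section
/- If J = ⋂_{l ∈ Λ} J_l is an intersection of a family of ideals on ω each of which has a topological representation, then J is weakly selective. -/
/-!
Weak selectivity passes to intersections, so it suffices to treat one ideal `J` represented by
`ρ : ℕ → X` and a σ-ideal `I`. Let `b` be `J`-positive and `f : ℕ → ℕ`. If some fibre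
`b ∩ f⁻¹{c}` is positive we are done; otherwise the closures `F c` of the images of the fibres
all lie in `I`, hence so does `⋃ c, F c`, and `B = cl(ρ b) \ ⋃ c, F c` is `I`-positive. Every
neighbourhood of a point of `B` contains images of points of `b` with infinitely many
`f`-values, so running through a countable base one picks, one basic open set at a time, points
of `b` with pairwise distinct `f`-values whose images are dense in `B`. They form a `J`-positive
set on which `f` is one-to-one.
-/

open Set TopologicalSpace

/-- `J` is weakly selective: for every `J`-positive `b` and `f : b → ω` there is a
`J`-positive `a ⊆ b` on which `f` is one-to-one or constant. -/
def WeaklySelective (J : Set (Set ℕ)) : Prop :=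
  ∀ b : Set ℕ, b ∉ J → ∀ f : ℕ → ℕ,
    ∃ a : Set ℕ, a ⊆ b ∧ a ∉ J ∧ (Set.InjOn f a ∨ ∃ c : ℕ, ∀ n ∈ a, f n = c)

theorem exists_seq_mem_injective_comp {α β : Type*} {S : ℕ → Set α} {f : α → β}
    (hS : ∀ n, (f '' S n).Infinite) :
    ∃ g : ℕ → α, (∀ n, g n ∈ S n) ∧ (f ∘ g).Injective := by
  classical
  have hpick : ∀ (t : Finset β) n, ∃ x ∈ S n, f x ∉ t := fun t n => by
    obtain ⟨_, ⟨x, hx, rfl⟩, hxt⟩ := (hS n).exists_notMem_finset t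
    exact ⟨x, hx, hxt⟩
  choose pick pick_mem pick_notMem using hpick
  -- `used n` holds the `f`-values of the first `n` terms of the sequence
  let used : ℕ → Finset β := fun n => Nat.rec ∅ (fun k t => insert (f (pick t k)) t) n
  have used_mono : Monotone used :=
    monotone_nat_of_le_succ fun _ => Finset.subset_insert _ _
  have mem_used : ∀ {k n}, k < n → f (pick (used k) k) ∈ used n := fun hkn =>
    used_mono hkn (Finset.mem_insert_self _ _)
  refine ⟨fun n => pick (used n) n, fun n => pick_mem _ n, Function.Injective.of_lt_imp_ne ?_⟩
  intro i j hij hf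
  have hf : f (pick (used i) i) = f (pick (used j) j) := hf
  exact pick_notMem (used j) j (hf ▸ mem_used hij)

theorem exists_injOn_subset_closure_image {α β X : Type*} [TopologicalSpace X]
    [SecondCountableTopology X] {ρ : α → X} {f : α → β} {b : Set α} {B : Set X}
    (hB : ∀ x ∈ B, ∀ U, IsOpen U → x ∈ U → (f '' (b ∩ ρ ⁻¹' U)).Infinite) :
    ∃ a ⊆ b, InjOn f a ∧ B ⊆ closure (ρ '' a) := by
  obtain ⟨𝓑, h𝓑c, -, h𝓑⟩ := exists_countable_basis X
  set T := {U ∈ 𝓑 | (U ∩ B).Nonempty}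
  rcases T.eq_empty_or_nonempty with hT | hT
  · refine ⟨∅, empty_subset _, injOn_empty f, fun x hx => ?_⟩
    obtain ⟨U, hU, hxU, -⟩ := h𝓑.exists_subset_of_mem_open (mem_univ x) isOpen_univ
    exact absurd (show U ∈ T from ⟨hU, x, hxU, hx⟩) (hT ▸ notMem_empty U)
  obtain ⟨U, hUT⟩ := (h𝓑c.mono (sep_subset _ _)).exists_eq_range hT
  obtain ⟨g, hg, hinj⟩ := exists_seq_mem_injective_comp (S := fun n => b ∩ ρ ⁻¹' U n)
    (f := f) fun n => by
      obtain ⟨h𝓑n, x, hxU, hxB⟩ : U n ∈ T := hUT.superset (mem_range_self n)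
      exact hB x hxB _ (h𝓑.isOpen h𝓑n) hxU
  refine ⟨range g, range_subset_iff.2 fun n => (hg n).1, ?_, fun x hx => ?_⟩
  · rintro _ ⟨i, rfl⟩ _ ⟨j, rfl⟩ hij
    exact congrArg g (hinj hij)
  · refine h𝓑.mem_closure_iff.2 fun V hV hxV => ?_
    obtain ⟨n, rfl⟩ : V ∈ range U := hUT.subset ⟨hV, x, hxV, hx⟩
    exact ⟨ρ (g n), (hg n).2, mem_image_of_mem _ (mem_range_self n)⟩

theorem infinite_image_of_mem_closure_diff {α β X : Type*} [TopologicalSpace X]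
    {ρ : α → X} {f : α → β} {b : Set α} {x : X}
    (hx : x ∈ closure (ρ '' b) \ ⋃ c, closure (ρ '' (b ∩ f ⁻¹' {c})))
    {U : Set X} (hU : IsOpen U) (hxU : x ∈ U) :
    (f '' (b ∩ ρ ⁻¹' U)).Infinite := by
  intro hfin
  set W := U ∩ ⋂ c ∈ f '' (b ∩ ρ ⁻¹' U), (closure (ρ '' (b ∩ f ⁻¹' {c})))ᶜ
  have hW : IsOpen W :=
    hU.inter (hfin.isOpen_biInter fun _ _ => isClosed_closure.isOpen_compl)
  have hxW : x ∈ W := ⟨hxU, mem_iInter₂.2 fun c _ hc => hx.2 (mem_iUnion.2 ⟨c, hc⟩)⟩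
  obtain ⟨_, hyW, m, hm, rfl⟩ := mem_closure_iff.1 hx.1 W hW hxW
  exact mem_iInter₂.1 hyW.2 (f m) ⟨m, ⟨hm, hyW.1⟩, rfl⟩ (subset_closure ⟨m, ⟨hm, rfl⟩, rfl⟩)

theorem IsSigmaIdeal.union_iUnion_mem {X : Type*} {I : Set (Set X)} (hI : IsSigmaIdeal I)
    {A : Set X} {F : ℕ → Set X} (hA : A ∈ I) (hF : ∀ n, F n ∈ I) : A ∪ ⋃ n, F n ∈ I := by
  have := hI.2.1 (fun n => Nat.rec A (fun k _ => F k) n) (by rintro (_ | n); exacts [hA, hF n])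
  rwa [← union_iUnion_nat_succ] at this

theorem HasTopRep.weaklySelective {J : Set (Set ℕ)} (hJ : HasTopRep J) : WeaklySelective J := by
  obtain ⟨X, _, _, _, I, hI, ρ, -, -, -, hρ⟩ := hJ
  have : SecondCountableTopology X := by
    let := metrizableSpaceMetric X
    exact UniformSpace.secondCountable_of_separable X
  intro b hb f
  by_cases hfib : ∃ c, b ∩ f ⁻¹' {c} ∉ J
  · obtain ⟨c, hc⟩ := hfib
    exact ⟨_, inter_subset_left, hc, Or.inr ⟨c, fun n hn => hn.2⟩⟩
  push Not at hfib
  set B := closure (ρ '' b) \ ⋃ c, closure (ρ '' (b ∩ f ⁻¹' {c}))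
  have hBI : B ∉ I := fun hB => hb <| (hρ b).2 <| hI.1 _ _ (subset_sdiff_union _ _)
    (hI.union_iUnion_mem hB fun c => (hρ _).1 (hfib c))
  obtain ⟨a, hab, hinj, hBa⟩ := exists_injOn_subset_closure_image (f := f) (B := B)
    fun x hx _ => infinite_image_of_mem_closure_diff hx
  exact ⟨a, hab, fun ha => hBI (hI.1 _ _ hBa ((hρ a).1 ha)), Or.inl hinj⟩

theorem WeaklySelective.iInter {ι : Sort*} {Js : ι → Set (Set ℕ)}
    (h : ∀ l, WeaklySelective (Js l)) : WeaklySelective (⋂ l, Js l) := by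
  intro b hb f
  obtain ⟨l, hbl⟩ : ∃ l, b ∉ Js l := by simpa using hb
  obtain ⟨a, hab, hal, hf⟩ := h l b hbl f
  exact ⟨a, hab, fun ha => hal (mem_iInter.1 ha l), hf⟩

theorem weaklySelective_of_iInter_topRep_general
    {Λ : Type} (Js : Λ → Set (Set ℕ))
    (hrep : ∀ l, HasTopRep (Js l))
    (J : Set (Set ℕ)) (hJ : J = ⋂ l, Js l) :
    WeaklySelective J :=
  hJ ▸ WeaklySelective.iInter fun l => (hrep l).weaklySelective

/-- An intersection of a family of ideals with topological representations is
weakly selective. -/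
theorem weaklySelective_of_iInter_topRep
    {Λ : Type} (Js : Λ → Set (Set ℕ))
    (hid : ∀ l, IsIdeal (Js l)) (hrep : ∀ l, HasTopRep (Js l))
    (J : Set (Set ℕ)) (hJ : J = ⋂ l, Js l) :
    WeaklySelective J :=
  weaklySelective_of_iInter_topRep_general Js hrep J hJ
end

section
/- If an ideal J on ω is countably separated and dense, then there is a countable family witnessing that J is countably separated which separates points of ω (for all m ≠ n there is a member containing m but not n) and is such that every Boolean combination of its elements is either infinite or empty. -/
open Set TopologicalSpace

/-- Boolean combinations of the members of the family `c`. -/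
inductive IsBoolComb (c : ℕ → Set ℕ) : Set ℕ → Prop
  | basic (n : ℕ) : IsBoolComb c (c n)
  | compl {s : Set ℕ} : IsBoolComb c s → IsBoolComb c sᶜ
  | inter {s t : Set ℕ} : IsBoolComb c s → IsBoolComb c t → IsBoolComb c (s ∩ t)
  | union {s t : Set ℕ} : IsBoolComb c s → IsBoolComb c t → IsBoolComb c (s ∪ t)


/-!
Build the new family `e₀, e₁, …` one set at a time, keeping every nonempty cell of the finite
partition generated by `e₀, …, e_{N-1}` infinite; a Boolean combination is a union of such cells,
hence infinite or empty. Even stages replace a separator `c j` by a subset `e` with `c j \ e ∈ J`,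
which separates just as well. To keep the cells infinite, inside each cell meeting `c j` in an
infinite set, density gives an infinite `J`-set there, half of which is removed from `c j`; a cell
meeting `c j` finitely is removed from `c j` altogether. Odd stages separate a pair `m ≠ n` by an
infinite, co-infinite subset of the cell of `m`.
-/

section Ideal

variable {α ι : Type*} {J : Set (Set α)}

theorem IsIdeal.empty_mem (hJ : IsIdeal J) [Nonempty α] : ∅ ∈ J :=
  hJ.1 _ _ (empty_subset _) (hJ.2.2 (Classical.arbitrary α))

theorem IsIdeal.biUnion_finset_mem (hJ : IsIdeal J) [Nonempty α] (t : Finset ι)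
    {f : ι → Set α} (hf : ∀ i ∈ t, f i ∈ J) : (⋃ i ∈ t, f i) ∈ J := by
  classical
  induction t using Finset.induction_on with
  | empty => simpa using hJ.empty_mem
  | insert i t _ ih =>
    rw [Finset.set_biUnion_insert]
    exact hJ.2.1 _ _ (hf i (t.mem_insert_self i))
      (ih fun j hj => hf j (Finset.mem_insert_of_mem hj))

theorem IsIdeal.iUnion_mem (hJ : IsIdeal J) [Nonempty α] [Finite ι] {f : ι → Set α}
    (hf : ∀ i, f i ∈ J) : (⋃ i, f i) ∈ J := by
  cases nonempty_fintype ι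
  simpa using hJ.biUnion_finset_mem Finset.univ fun i _ => hf i

theorem IsIdeal.mem_of_finite (hJ : IsIdeal J) [Nonempty α] {s : Set α} (hs : s.Finite) :
    s ∈ J := by
  simpa using hJ.biUnion_finset_mem hs.toFinset fun x _ => hJ.2.2 x

end Ideal

theorem Set.Infinite.exists_subset_infinite_diff {α : Type*} {s : Set α} (hs : s.Infinite) :
    ∃ t ⊆ s, t.Infinite ∧ (s \ t).Infinite := by
  obtain ⟨t, u, rfl, htu, hcard⟩ := hs.exists_union_disjoint_cardinal_eq_of_infinite
  have hinf : t.Infinite ↔ u.Infinite := by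
    simp only [← Set.infinite_coe_iff, Cardinal.infinite_iff, hcard]
  have ht : t.Infinite := by
    obtain h | h := infinite_union.1 hs
    exacts [h, hinf.2 h]
  refine ⟨t, subset_union_left, ht, ?_⟩
  rwa [union_sdiff_left, htu.symm.sdiff_eq_left, ← hinf]

section Fibers

variable {α K : Type*}

def HasInfiniteFibers (κ : α → K) : Prop :=
  ∀ x, {y | κ y = κ x}.Infinite

theorem HasInfiniteFibers.congr {K' : Type*} {κ : α → K} {κ' : α → K'}
    (h : HasInfiniteFibers κ) (hκ : ∀ x y, κ' y = κ' x ↔ κ y = κ x) :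
    HasInfiniteFibers κ' := by
  intro x
  simpa only [hκ] using h x

theorem hasInfiniteFibers_prod_mem_iff {κ : α → K} {d : Set α} :
    HasInfiniteFibers (fun x => (κ x, x ∈ d)) ↔
      (∀ x ∈ d, {y ∈ d | κ y = κ x}.Infinite) ∧ ∀ x ∉ d, {y ∉ d | κ y = κ x}.Infinite := by
  refine ⟨fun h => ⟨fun x hx => ?_, fun x hx => ?_⟩, fun ⟨hin, hout⟩ x => ?_⟩
  · simpa [hx, and_comm] using h x
  · simpa [hx, and_comm] using h x
  · by_cases hx : x ∈ d
    · simpa [hx, and_comm] using hin x hx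
    · simpa [hx, and_comm] using hout x hx

end Fibers

section Refinement

variable {α K : Type*} {J : Set (Set α)} {κ : α → K}

theorem IsIdeal.exists_subset_inter_of_dense [Nonempty α] (hJ : IsIdeal J) (hd : IdealDense J)
    (F c : Set α) :
    ∃ d ⊆ F ∩ c, (F ∩ c) \ d ∈ J ∧ (d.Infinite ∨ d = ∅) ∧ (F.Infinite → (F \ d).Infinite) := by
  by_cases hfin : (F ∩ c).Finite
  · exact ⟨∅, empty_subset _, by simpa using hJ.mem_of_finite hfin, Or.inr rfl, by simp⟩
  obtain ⟨z, hz, hz_inf, hzJ⟩ := hd _ hfin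
  obtain ⟨w, hw, hw_inf, hzw_inf⟩ := hz_inf.exists_subset_infinite_diff
  refine ⟨(F ∩ c) \ w, sdiff_subset, ?_, Or.inl ?_, fun _ => ?_⟩
  · refine hJ.1 _ _ (fun x hx => ?_) (hJ.1 _ _ hw hzJ)
    simpa [hx.1] using hx.2
  · exact hzw_inf.mono (sdiff_subset_sdiff_left hz)
  · exact hw_inf.mono fun x hx => ⟨(hz (hw hx)).1, fun h => h.2 hx⟩

theorem HasInfiniteFibers.exists_refine_subset_diff_mem [Nonempty α] [Finite K]
    (hκ : HasInfiniteFibers κ) (hJ : IsIdeal J) (hd : IdealDense J) (c : Set α) :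
    ∃ d ⊆ c, c \ d ∈ J ∧ HasInfiniteFibers fun x => (κ x, x ∈ d) := by
  choose δ hδ hδJ hδ_inf hδ_diff using fun k => hJ.exists_subset_inter_of_dense hd (κ ⁻¹' {k}) c
  have hκδ : ∀ {k y}, y ∈ δ k → κ y = k := fun hy => (hδ _ hy).1
  refine ⟨⋃ k, δ k, iUnion_subset fun k => (hδ k).trans inter_subset_right, ?_,
    hasInfiniteFibers_prod_mem_iff.2 ⟨fun x hx => ?_, fun x hx => ?_⟩⟩
  · refine hJ.1 _ _ (fun x hx => ?_) (hJ.iUnion_mem hδJ)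
    exact mem_iUnion.2 ⟨κ x, ⟨rfl, hx.1⟩, fun h => hx.2 (mem_iUnion.2 ⟨_, h⟩)⟩
  · obtain ⟨k, hxk⟩ := mem_iUnion.1 hx
    refine ((hδ_inf k).resolve_right (nonempty_iff_ne_empty.1 ⟨x, hxk⟩)).mono fun y hy => ?_
    exact ⟨mem_iUnion.2 ⟨k, hy⟩, (hκδ hy).trans (hκδ hxk).symm⟩
  · refine (hδ_diff (κ x) (hκ x)).mono fun y hy => ⟨fun h => ?_, hy.1⟩
    obtain ⟨j, hyj⟩ := mem_iUnion.1 h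
    obtain rfl := hκδ hyj
    exact hy.2 ((hy.1 : κ y = κ x) ▸ hyj)

theorem HasInfiniteFibers.exists_refine_mem_notMem (hκ : HasInfiniteFibers κ) {m n : α}
    (hmn : m ≠ n) : ∃ d : Set α, m ∈ d ∧ n ∉ d ∧ HasInfiniteFibers fun x => (κ x, x ∈ d) := by
  obtain ⟨t, ht, ht_inf, hdiff_inf⟩ :=
    ((hκ m).sdiff (toFinite ({m, n} : Set α))).exists_subset_infinite_diff
  have hκt : ∀ {y}, y ∈ insert m t → κ y = κ m := by
    rintro y (rfl | hy)
    exacts [rfl, (ht hy).1]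
  refine ⟨insert m t, mem_insert m t, ?_, hasInfiniteFibers_prod_mem_iff.2
    ⟨fun x hx => ?_, fun x hx => ?_⟩⟩
  · rintro (h | h)
    exacts [hmn h.symm, (ht h).2 (Or.inr rfl)]
  · exact ht_inf.mono fun y hy => ⟨Or.inr hy, (hκt (Or.inr hy)).trans (hκt hx).symm⟩
  by_cases hxm : κ x = κ m
  · refine hdiff_inf.mono fun y hy => ⟨?_, hy.1.1.trans hxm.symm⟩
    rintro (rfl | h)
    exacts [hy.1.2 (Or.inl rfl), hy.2 h]
  · exact (hκ x).mono fun y hy => ⟨fun h => hxm (hy.symm.trans (hκt h)), hy⟩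

end Refinement

section Construction

variable {α : Type*} {J : Set (Set α)} {c : ℕ → Set α}

theorem trace_eq_trace_iff {e : ℕ → Set α} {N : ℕ} {x y : α} :
    (fun i : Fin N => x ∈ e i) = (fun i : Fin N => y ∈ e i) ↔ ∀ n < N, (x ∈ e n ↔ y ∈ e n) := by
  simp only [funext_iff, eq_iff_iff, Fin.forall_iff]

theorem HasInfiniteFibers.trace_succ {e : ℕ → Set α} {N : ℕ}
    (h : HasInfiniteFibers fun x => ((fun i : Fin N => x ∈ e i), x ∈ e N)) :
    HasInfiniteFibers fun x (i : Fin (N + 1)) => x ∈ e i :=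
  h.congr fun _ _ => by
    simp only [Prod.ext_iff, eq_iff_iff, trace_eq_trace_iff, Nat.forall_lt_succ_right]

/-- A set `d` accomplishes the task `inl j` if it is a `J`-small shrinking of `c j`, and the task
`inr (m, n)` if it separates `m` from `n`. -/
def Accomplishes (J : Set (Set α)) (c : ℕ → Set α) : ℕ ⊕ α × α → Set α → Prop
  | .inl j, d => d ⊆ c j ∧ c j \ d ∈ J
  | .inr (m, n), d => m ≠ n → m ∈ d ∧ n ∉ d

theorem HasInfiniteFibers.exists_refine_accomplishes [Nonempty α] {K : Type*} [Finite K]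
    {κ : α → K} (hκ : HasInfiniteFibers κ) (hJ : IsIdeal J) (hd : IdealDense J)
    (t : ℕ ⊕ α × α) :
    ∃ d, (HasInfiniteFibers fun x => (κ x, x ∈ d)) ∧ Accomplishes J c t d := by
  rcases t with j | ⟨m, n⟩
  · obtain ⟨d, hdc, hdJ, hfib⟩ := hκ.exists_refine_subset_diff_mem hJ hd (c j)
    exact ⟨d, hfib, hdc, hdJ⟩
  by_cases hmn : m = n
  · exact ⟨∅, hκ.congr fun _ _ => by simp, fun h => absurd hmn h⟩
  obtain ⟨d, hm, hn, hfib⟩ := hκ.exists_refine_mem_notMem hmn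
  exact ⟨d, hfib, fun _ => ⟨hm, hn⟩⟩

variable [Denumerable α]

/-- Stage `N` accomplishes the `N`-th task while keeping every cell of the partition cut out by
stages `0, …, N` infinite. The choice by `Classical.epsilon` is meaningful because the earlier
stages already cut out infinite cells (`hasInfiniteFibers_refiningSeq`). -/
noncomputable def refiningSeq (J : Set (Set α)) (c : ℕ → Set α) : ℕ → Set α
  | N => Classical.epsilon fun d =>
      (HasInfiniteFibers fun x => ((fun i : Fin N => x ∈ refiningSeq J c i), x ∈ d)) ∧
        Accomplishes J c (Denumerable.ofNat _ N) d

theorem refiningSeq_spec (hJ : IsIdeal J) (hd : IdealDense J) {N : ℕ}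
    (h : HasInfiniteFibers fun x (i : Fin N) => x ∈ refiningSeq J c i) :
    (HasInfiniteFibers fun x => ((fun i : Fin N => x ∈ refiningSeq J c i), x ∈ refiningSeq J c N)) ∧
      Accomplishes J c (Denumerable.ofNat _ N) (refiningSeq J c N) := by
  rw [refiningSeq]
  exact Classical.epsilon_spec (h.exists_refine_accomplishes hJ hd _)

theorem hasInfiniteFibers_refiningSeq (hJ : IsIdeal J) (hd : IdealDense J) (N : ℕ) :
    HasInfiniteFibers fun x (i : Fin N) => x ∈ refiningSeq J c i := by
  induction N with
  | zero => exact fun _ => by simpa [funext_iff] using (infinite_univ : (univ : Set α).Infinite)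
  | succ N ih => exact (refiningSeq_spec hJ hd ih).1.trace_succ

theorem accomplishes_refiningSeq (hJ : IsIdeal J) (hd : IdealDense J) (t : ℕ ⊕ α × α) :
    Accomplishes J c t (refiningSeq J c (Encodable.encode t)) := by
  simpa using (refiningSeq_spec hJ hd (hasInfiniteFibers_refiningSeq hJ hd (Encodable.encode t))).2

end Construction

theorem IsBoolComb.exists_mem_iff_of_forall_lt {e : ℕ → Set ℕ} {s : Set ℕ} (hs : IsBoolComb e s) :
    ∃ N, ∀ x y, (∀ n < N, x ∈ e n ↔ y ∈ e n) → (x ∈ s ↔ y ∈ s) := by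
  induction hs with
  | basic n => exact ⟨n + 1, fun x y h => h n n.lt_succ_self⟩
  | compl _ ih =>
    obtain ⟨N, hN⟩ := ih
    exact ⟨N, fun x y h => not_congr (hN x y h)⟩
  | inter _ _ ih₁ ih₂ =>
    obtain ⟨N₁, hN₁⟩ := ih₁
    obtain ⟨N₂, hN₂⟩ := ih₂
    refine ⟨max N₁ N₂, fun x y h => and_congr ?_ ?_⟩
    exacts [hN₁ x y fun n hn => h n (lt_max_of_lt_left hn),
      hN₂ x y fun n hn => h n (lt_max_of_lt_right hn)]
  | union _ _ ih₁ ih₂ =>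
    obtain ⟨N₁, hN₁⟩ := ih₁
    obtain ⟨N₂, hN₂⟩ := ih₂
    refine ⟨max N₁ N₂, fun x y h => or_congr ?_ ?_⟩
    exacts [hN₁ x y fun n hn => h n (lt_max_of_lt_left hn),
      hN₂ x y fun n hn => h n (lt_max_of_lt_right hn)]

theorem IsBoolComb.infinite_or_eq_empty {e : ℕ → Set ℕ} {s : Set ℕ} (hs : IsBoolComb e s)
    (he : ∀ N, HasInfiniteFibers fun x (i : Fin N) => x ∈ e i) : s.Infinite ∨ s = ∅ := by
  obtain ⟨N, hN⟩ := hs.exists_mem_iff_of_forall_lt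
  refine s.eq_empty_or_nonempty.symm.imp (fun ⟨x, hx⟩ => (he N x).mono fun y hy => ?_) id
  exact (hN x y (trace_eq_trace_iff.1 hy.symm)).1 hx

theorem SeparatesIdeal.of_forall_exists_subset_diff_mem {α : Type*} {J : Set (Set α)}
    {c e : ℕ → Set α} (hc : SeparatesIdeal J c) (hJ : IsIdeal J)
    (he : ∀ n, ∃ k, e k ⊆ c n ∧ c n \ e k ∈ J) : SeparatesIdeal J e := by
  intro a ha b hb
  obtain ⟨n, hac, hbc⟩ := hc a ha b hb
  obtain ⟨k, hec, hceJ⟩ := he n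
  refine ⟨k, subset_eq_empty (inter_subset_inter_right a hec) hac, fun hbe => hbc ?_⟩
  refine hJ.1 _ _ (fun x hx => ?_) (hJ.2.1 _ _ hbe hceJ)
  by_cases hxe : x ∈ e k
  exacts [Or.inl ⟨hx.1, hxe⟩, Or.inr ⟨hx.2, hxe⟩]

/-- Lemma: a countably separated dense ideal admits a separating family which
separates points and whose Boolean combinations are all infinite or empty. -/
theorem improved_separating_family
    (J : Set (Set ℕ)) (hJ : IsIdeal J) (hd : IdealDense J)
    (hcs : CtblySeparated J) :
    ∃ c : ℕ → Set ℕ, SeparatesIdeal J c ∧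
      (∀ m n : ℕ, m ≠ n → ∃ k, m ∈ c k ∧ n ∉ c k) ∧
      (∀ s : Set ℕ, IsBoolComb c s → s.Infinite ∨ s = ∅) := by
  obtain ⟨c, hc⟩ := hcs
  have hacc := accomplishes_refiningSeq (c := c) hJ hd
  refine ⟨refiningSeq J c, hc.of_forall_exists_subset_diff_mem hJ fun n => ⟨_, hacc (.inl n)⟩,
    fun m n hmn => ⟨_, hacc (.inr (m, n)) hmn⟩,
    fun s hs => hs.infinite_or_eq_empty (hasInfiniteFibers_refiningSeq hJ hd)⟩
end

section
/- Let D be a countable dense subset of the Cantor space 2^ω and let J be a dense ideal on D which is countably separated by a family of sets of the form C ∩ D with C ⊆ 2^ω clopen. Then I = {A ⊆ 2^ω : A compact and ∃ a ∈ J with A ⊆ cl(a)} is a σ-ideal of compact sets: it contains all singletons, is closed under compact subsets, and whenever a compact set is a countable union of members of I it belongs to I. -/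
/-!
Call `K` closure-covered when `K ⊆ closure e` for some `e ∈ J`; for compact sets this is a local
property. A point outside `D` is the limit of a sequence in `D`, and every infinite subset of that
sequence, in particular one in `J` provided by density, accumulates at the point.

For a compact union `A = ⋃ f n` with `f n ⊆ closure (a n)`, the points at which `A` is not locally
covered form a compact set. If it were nonempty, by the Baire category theorem one `closure (a n)`
would contain a relatively open piece of it, giving a closed neighbourhood `V` of one of its points
such that `A ∩ V` is locally covered off `closure (a n)`. Exhausting that part by countably many
compact pieces covered by sets `E m ∈ J`, and gluing `a n` to suitably trimmed `E m`, yields a set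
which every separating `c k` disjoint from `a n` meets inside finitely many `E m`; by separation it
belongs to `J`, so `A` is locally covered at that point after all.
-/

open Set TopologicalSpace

open Filter Topology

section

variable {X : Type*}

def IsSeparatedBy (J : Set (Set X)) (D : Set X) (c : ℕ → Set X) : Prop :=
  ∀ a ∈ J, ∀ b : Set X, b ⊆ D → b ∉ J → ∃ n, a ∩ (c n ∩ D) = ∅ ∧ b ∩ (c n ∩ D) ∉ J

variable {D : Set X} {J : Set (Set X)} {c : ℕ → Set X}

theorem accumulate_mem (hunion : ∀ a b, a ∈ J → b ∈ J → a ∪ b ∈ J) {E : ℕ → Set X}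
    (hE : ∀ m, E m ∈ J) (n : ℕ) : accumulate E n ∈ J := by
  induction n with
  | zero => simpa only [accumulate_zero_nat] using hE 0
  | succ n ih => simpa only [accumulate_succ] using hunion _ _ ih (hE (n + 1))

theorem IsSeparatedBy.mem_of_forall_inter_mem (hsep : IsSeparatedBy J D c)
    (hsub : ∀ a ∈ J, a ⊆ D) {w e : Set X} (hw : w ∈ J) (he : e ⊆ D)
    (h : ∀ k, w ∩ c k = ∅ → e ∩ c k ∈ J) : e ∈ J := by
  by_contra heJ
  obtain ⟨k, hwk, hek⟩ := hsep w hw e he heJ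
  rw [← inter_assoc, inter_eq_left.2 (inter_subset_left.trans (hsub w hw))] at hwk
  rw [← inter_assoc, inter_eq_left.2 (inter_subset_left.trans he)] at hek
  exact hek (h k hwk)

variable [TopologicalSpace X]

def ClosureCovered (J : Set (Set X)) (K : Set X) : Prop := ∃ e ∈ J, K ⊆ closure e

theorem ClosureCovered.mono {K L : Set X} (hKL : K ⊆ L) (hL : ClosureCovered J L) :
    ClosureCovered J K :=
  let ⟨e, he, hLe⟩ := hL
  ⟨e, he, hKL.trans hLe⟩

theorem ClosureCovered.union (hunion : ∀ a b, a ∈ J → b ∈ J → a ∪ b ∈ J) {K L : Set X}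
    (hK : ClosureCovered J K) (hL : ClosureCovered J L) : ClosureCovered J (K ∪ L) :=
  let ⟨e, he, hKe⟩ := hK
  let ⟨f, hf, hLf⟩ := hL
  ⟨e ∪ f, hunion e f he hf, by
    rw [closure_union]; exact union_subset_union hKe hLf⟩

theorem IsCompact.closureCovered_of_forall_nhdsWithin
    (hunion : ∀ a b, a ∈ J → b ∈ J → a ∪ b ∈ J) (hJ : J.Nonempty) {K : Set X}
    (hK : IsCompact K) (hloc : ∀ x ∈ K, ∃ t ∈ 𝓝[K] x, ClosureCovered J t) :
    ClosureCovered J K :=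
  hK.induction_on (p := ClosureCovered J) (hJ.elim fun e he => ⟨e, he, empty_subset _⟩)
    (fun _ _ hst ht => ht.mono hst) (fun _ _ hs ht => hs.union hunion ht) hloc

/-- The witness is `w ∪ ⋃ m, (E m ∩ S m)`, where `S m` avoids those `c k` (`k ≤ m`, `c k`
missing `w`) on which `K` is already covered by `E 0, …, E (N k)` with `N k < m`: a point of `K`
first covered by `closure (E m)` lies in the open set `S m`, and `c k` meets only the pieces
`E 0, …, E (max k (N k))`. -/
theorem IsSeparatedBy.closureCovered_of_cover (hsep : IsSeparatedBy J D c)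
    (hclop : ∀ k, IsClopen (c k)) (hsub : ∀ a ∈ J, a ⊆ D)
    (hdown : ∀ a b, a ⊆ b → b ∈ J → a ∈ J) (hunion : ∀ a b, a ∈ J → b ∈ J → a ∪ b ∈ J)
    {K w : Set X} (hw : w ∈ J) {E : ℕ → Set X} (hE : ∀ m, E m ∈ J)
    (hKE : K ⊆ closure w ∪ ⋃ m, closure (E m)) (N : ℕ → ℕ)
    (hN : ∀ k, w ∩ c k = ∅ → ∀ x ∈ K ∩ c k, ∃ m ≤ N k, x ∈ closure (E m)) :
    ClosureCovered J K := by
  classical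
  let F : ℕ → Finset ℕ := fun m =>
    (Finset.range (m + 1)).filter fun k => w ∩ c k = ∅ ∧ N k < m
  let S : ℕ → Set X := fun m => (⋃ k ∈ F m, c k)ᶜ
  have hS : ∀ m, IsOpen (S m) := fun m =>
    (isClosed_biUnion_finset fun k _ => (hclop k).isClosed).isOpen_compl
  set e := w ∪ ⋃ m, E m ∩ S m
  have heD : e ⊆ D :=
    union_subset (hsub w hw) (iUnion_subset fun m => inter_subset_left.trans (hsub _ (hE m)))
  have hek : ∀ k, w ∩ c k = ∅ → e ∩ c k ⊆ accumulate E (max k (N k)) := by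
    rintro k hk x ⟨hx | hx, hxk⟩
    · exact absurd (hk.subset ⟨hx, hxk⟩) (notMem_empty x)
    · obtain ⟨m, hxE, hxS⟩ := mem_iUnion.1 hx
      refine mem_accumulate.2 ⟨m, ?_, hxE⟩
      by_contra! hm
      have hkF : k ∈ F m := Finset.mem_filter.2 ⟨Finset.mem_range.2 (by omega), hk, by omega⟩
      exact hxS (mem_biUnion hkF hxk)
  refine ⟨e, hsep.mem_of_forall_inter_mem hsub hw heD fun k hk =>
    hdown _ _ (hek k hk) (accumulate_mem hunion hE _), fun x hxK => ?_⟩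
  rcases hKE hxK with hx | hx
  · exact closure_mono subset_union_left hx
  have hex : ∃ m, x ∈ closure (E m) := mem_iUnion.1 hx
  have hxS : x ∈ S (Nat.find hex) := by
    simp only [S, mem_compl_iff, mem_iUnion, not_exists]
    intro k hkF hxk
    obtain ⟨-, hk, hNk⟩ := Finset.mem_filter.1 hkF
    obtain ⟨m, hm, hxm⟩ := hN k hk x ⟨hxK, hxk⟩
    exact Nat.find_min hex (by omega) hxm
  refine closure_mono (subset_union_right.trans' (subset_iUnion _ (Nat.find hex))) ?_
  rw [inter_comm]
  exact (hS _).inter_closure ⟨hxS, Nat.find_spec hex⟩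

theorem IsOpen.exists_iUnion_isClopen [CompactSpace X] [T2Space X] [TotallyDisconnectedSpace X]
    [SecondCountableTopology X] {U : Set X} (hU : IsOpen U) :
    ∃ O : ℕ → Set X, (∀ m, IsClopen (O m)) ∧ ⋃ m, O m = U := by
  obtain ⟨T, hTc, hTS, hTU⟩ :=
    isOpen_sUnion_countable {O | IsClopen O ∧ O ⊆ U} fun O hO => hO.1.isOpen
  obtain ⟨O, hO⟩ := (hTc.insert ∅).exists_eq_range (insert_nonempty _ _)
  refine ⟨O, fun m => ?_, ?_⟩
  · have hm : O m ∈ insert ∅ T := hO ▸ mem_range_self m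
    rcases hm with hm | hm
    · exact hm ▸ isClopen_empty
    · exact (hTS hm).1
  · rw [← sUnion_range, ← hO, sUnion_insert, empty_union, hTU]
    exact (isTopologicalBasis_isClopen.open_eq_sUnion' hU).symm

theorem IsCompact.exists_mem_nhds_inter_subset_of_subset_iUnion [T2Space X] {B : Set X}
    (hB : IsCompact B) (hne : B.Nonempty) {F : ℕ → Set X} (hF : ∀ n, IsClosed (F n))
    (hBF : B ⊆ ⋃ n, F n) : ∃ n, ∃ x ∈ B, ∃ U ∈ 𝓝 x, B ∩ U ⊆ F n := by
  have : Nonempty B := hne.to_subtype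
  have : CompactSpace B := isCompact_iff_compactSpace.1 hB
  obtain ⟨n, ⟨x, hx⟩⟩ := nonempty_interior_of_iUnion_of_closed
    (f := fun n => ((↑) : B → X) ⁻¹' F n) (fun n => (hF n).preimage continuous_subtype_val)
    (eq_univ_of_forall fun x => by simpa using hBF x.2)
  obtain ⟨U, hU, hUx⟩ := isOpen_induced_iff.1 (isOpen_interior (s := ((↑) : B → X) ⁻¹' F n))
  refine ⟨n, x, x.2, U, hU.mem_nhds ?_, fun y ⟨hyB, hyU⟩ => ?_⟩
  · exact (hUx ▸ hx : x ∈ ((↑) : B → X) ⁻¹' U)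
  · have hy : (⟨y, hyB⟩ : B) ∈ ((↑) : B → X) ⁻¹' U := hyU
    rw [hUx] at hy
    exact interior_subset (s := ((↑) : B → X) ⁻¹' F n) hy

theorem IsSeparatedBy.closureCovered_of_forall_notMem_closure [CompactSpace X] [T2Space X]
    [TotallyDisconnectedSpace X] [SecondCountableTopology X] (hsep : IsSeparatedBy J D c)
    (hclop : ∀ k, IsClopen (c k)) (hsub : ∀ a ∈ J, a ⊆ D)
    (hdown : ∀ a b, a ⊆ b → b ∈ J → a ∈ J) (hunion : ∀ a b, a ∈ J → b ∈ J → a ∪ b ∈ J)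
    {K w : Set X} (hK : IsCompact K) (hw : w ∈ J)
    (hloc : ∀ x ∈ K, x ∉ closure w → ∃ t ∈ 𝓝[K] x, ClosureCovered J t) :
    ClosureCovered J K := by
  obtain ⟨O, hO, hOw⟩ := (isClosed_closure (s := w)).isOpen_compl.exists_iUnion_isClopen
  have hcov : ∀ m, ClosureCovered J (K ∩ O m) := fun m =>
    (hK.inter_right (hO m).isClosed).closureCovered_of_forall_nhdsWithin hunion ⟨w, hw⟩
      fun x hx => by
        obtain ⟨t, ht, htJ⟩ := hloc x hx.1 (hOw.subset (mem_iUnion_of_mem m hx.2))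
        exact ⟨t, nhdsWithin_mono x inter_subset_left ht, htJ⟩
  choose E hE hKE using hcov
  have hfin : ∀ k, ∃ N, w ∩ c k = ∅ → K ∩ c k ⊆ accumulate O N := by
    intro k
    by_cases hk : w ∩ c k = ∅
    · have hKO : K ∩ c k ⊆ ⋃ N, accumulate O N := by
        rintro x ⟨-, hxk⟩
        rw [iUnion_accumulate, hOw]
        intro hxw
        simpa [inter_comm, hk] using (hclop k).isOpen.inter_closure ⟨hxk, hxw⟩
      obtain ⟨N, hN⟩ := (hK.inter_right (hclop k).isClosed).elim_directed_cover _
        (fun N => isOpen_biUnion fun m _ => (hO m).isOpen) hKO monotone_accumulate.directed_le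
      exact ⟨N, fun _ => hN⟩
    · exact ⟨0, fun h => absurd h hk⟩
  choose N hN using hfin
  refine hsep.closureCovered_of_cover hclop hsub hdown hunion hw hE (fun x hxK => ?_) N
    fun k hk x hx => ?_
  · by_cases hxw : x ∈ closure w
    · exact Or.inl hxw
    · obtain ⟨m, hxm⟩ := mem_iUnion.1 (hOw.symm ▸ hxw : x ∈ ⋃ m, O m)
      exact Or.inr (mem_iUnion_of_mem m (hKE m ⟨hxK, hxm⟩))
  · obtain ⟨m, hm, hxm⟩ := mem_accumulate.1 (hN k hk hx)
    exact ⟨m, hm, hKE m ⟨hx.1, hxm⟩⟩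

theorem IsSeparatedBy.closureCovered_iUnion [CompactSpace X] [T2Space X]
    [TotallyDisconnectedSpace X] [SecondCountableTopology X] (hsep : IsSeparatedBy J D c)
    (hclop : ∀ k, IsClopen (c k)) (hsub : ∀ a ∈ J, a ⊆ D)
    (hdown : ∀ a b, a ⊆ b → b ∈ J → a ∈ J) (hunion : ∀ a b, a ∈ J → b ∈ J → a ∪ b ∈ J)
    {f : ℕ → Set X} (hf : ∀ n, ClosureCovered J (f n)) (hA : IsCompact (⋃ n, f n)) :
    ClosureCovered J (⋃ n, f n) := by
  choose a ha hfa using hf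
  set A := ⋃ n, f n
  let G := {x | ∃ t ∈ 𝓝[A] x, ClosureCovered J t}
  have hG : IsOpen G := isOpen_iff_mem_nhds.2 fun x ⟨t, ht, htJ⟩ =>
    (eventually_nhds_nhdsWithin.2 ht).mono fun y hy => ⟨t, hy, htJ⟩
  suffices hAG : A ⊆ G from hA.closureCovered_of_forall_nhdsWithin hunion ⟨a 0, ha 0⟩ hAG
  by_contra hAG
  obtain ⟨n, x, ⟨-, hxG⟩, U, hU, hBU⟩ :=
    (hA.diff hG).exists_mem_nhds_inter_subset_of_subset_iUnion (nonempty_of_not_subset hAG)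
      (fun n => isClosed_closure) fun y hy => by
        obtain ⟨n, hyn⟩ := mem_iUnion.1 hy.1
        exact mem_iUnion_of_mem n (hfa n hyn)
  obtain ⟨V, hV, hVc, hVU⟩ := exists_mem_nhds_isClosed_subset hU
  refine hxG ⟨A ∩ V, inter_mem_nhdsWithin A hV, ?_⟩
  refine hsep.closureCovered_of_forall_notMem_closure hclop hsub hdown hunion
    (hA.inter_right hVc) (ha n) fun y hy hyn => ?_
  have hyG : y ∈ G := by
    by_contra hyG
    exact hyn (hBU ⟨⟨hy.1, hyG⟩, hVU hy.2⟩)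
  obtain ⟨t, ht, htJ⟩ := hyG
  exact ⟨t, nhdsWithin_mono y inter_subset_left ht, htJ⟩

theorem mem_closure_of_subset_range_of_tendsto {u : ℕ → X} {x : X}
    (hu : Tendsto u atTop (𝓝 x)) {a : Set X} (hau : a ⊆ range u) (ha : a.Infinite) :
    x ∈ closure a := by
  refine mem_closure_iff_nhds.2 fun U hU => ?_
  obtain ⟨M, hM⟩ := eventually_atTop.1 (hu hU)
  obtain ⟨p, hpa, hpM⟩ := (ha.sdiff ((finite_Iio M).image u)).nonempty
  obtain ⟨n, rfl⟩ := hau hpa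
  exact ⟨u n, hM n (not_lt.1 fun hn => hpM (mem_image_of_mem u hn)), hpa⟩

theorem exists_mem_closure_of_dense [FrechetUrysohnSpace X] [T1Space X] (hD : Dense D)
    (hsing : ∀ d ∈ D, ({d} : Set X) ∈ J)
    (hdense : ∀ b : Set X, b ⊆ D → b.Infinite → ∃ a : Set X, a ⊆ b ∧ a.Infinite ∧ a ∈ J)
    (x : X) : ∃ a ∈ J, x ∈ closure a := by
  by_cases hx : x ∈ D
  · exact ⟨{x}, hsing x hx, subset_closure rfl⟩
  obtain ⟨u, huD, hu⟩ := mem_closure_iff_seq_limit.1 (hD x)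
  have hinf : (range u).Infinite := fun hfin => hx <| range_subset_iff.2 huD <|
    hfin.isClosed.closure_subset (mem_closure_of_tendsto hu (.of_forall mem_range_self))
  obtain ⟨a, hau, ha, haJ⟩ := hdense _ (range_subset_iff.2 huD) hinf
  exact ⟨a, haJ, mem_closure_of_subset_range_of_tendsto hu hau ha⟩

end

theorem sigmaIdeal_of_compacts_from_ideal_general
    (D : Set (ℕ → Bool)) (hDd : Dense D)
    (J : Set (Set (ℕ → Bool)))
    (hsub : ∀ a ∈ J, a ⊆ D)
    (hdown : ∀ a b : Set (ℕ → Bool), a ⊆ b → b ∈ J → a ∈ J)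
    (hunion : ∀ a b : Set (ℕ → Bool), a ∈ J → b ∈ J → a ∪ b ∈ J)
    (hsing : ∀ d ∈ D, ({d} : Set (ℕ → Bool)) ∈ J)
    (hdense : ∀ b : Set (ℕ → Bool), b ⊆ D → b.Infinite →
      ∃ a : Set (ℕ → Bool), a ⊆ b ∧ a.Infinite ∧ a ∈ J)
    (c : ℕ → Set (ℕ → Bool)) (hclop : ∀ n, IsClopen (c n))
    (hsep : ∀ a ∈ J, ∀ b : Set (ℕ → Bool), b ⊆ D → b ∉ J →
      ∃ n, a ∩ (c n ∩ D) = ∅ ∧ b ∩ (c n ∩ D) ∉ J) :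
    (∀ x : ℕ → Bool,
      ({x} : Set (ℕ → Bool)) ∈ {A | IsCompact A ∧ ∃ a ∈ J, A ⊆ closure a}) ∧
    (∀ A B : Set (ℕ → Bool), A ⊆ B → IsCompact A →
      B ∈ {A | IsCompact A ∧ ∃ a ∈ J, A ⊆ closure a} →
      A ∈ {A | IsCompact A ∧ ∃ a ∈ J, A ⊆ closure a}) ∧
    (∀ f : ℕ → Set (ℕ → Bool),
      (∀ n, f n ∈ {A | IsCompact A ∧ ∃ a ∈ J, A ⊆ closure a}) →
      IsCompact (⋃ n, f n) →
      (⋃ n, f n) ∈ {A | IsCompact A ∧ ∃ a ∈ J, A ⊆ closure a}) := by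
  refine ⟨fun x => ⟨isCompact_singleton, ?_⟩,
    fun A B hAB hA hB => ⟨hA, ClosureCovered.mono hAB hB.2⟩,
    fun f hf hA => ⟨hA, IsSeparatedBy.closureCovered_iUnion hsep hclop hsub hdown hunion
      (fun n => (hf n).2) hA⟩⟩
  obtain ⟨a, haJ, hxa⟩ := exists_mem_closure_of_dense hDd hsing hdense x
  exact ⟨a, haJ, singleton_subset_iff.2 hxa⟩

/-- Lemma: for a dense ideal `J` on a countable dense `D ⊆ 2^ω` which is countably
separated by traces of clopen sets, the family
`I = {A compact : ∃ a ∈ J, A ⊆ cl(a)}` is a σ-ideal of compact sets. -/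
theorem sigmaIdeal_of_compacts_from_ideal
    (D : Set (ℕ → Bool)) (hDc : D.Countable) (hDd : Dense D)
    (J : Set (Set (ℕ → Bool)))
    (hsub : ∀ a ∈ J, a ⊆ D)
    (hdown : ∀ a b : Set (ℕ → Bool), a ⊆ b → b ∈ J → a ∈ J)
    (hunion : ∀ a b : Set (ℕ → Bool), a ∈ J → b ∈ J → a ∪ b ∈ J)
    (hsing : ∀ d ∈ D, ({d} : Set (ℕ → Bool)) ∈ J)
    (hdense : ∀ b : Set (ℕ → Bool), b ⊆ D → b.Infinite →
      ∃ a : Set (ℕ → Bool), a ⊆ b ∧ a.Infinite ∧ a ∈ J)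
    (c : ℕ → Set (ℕ → Bool)) (hclop : ∀ n, IsClopen (c n))
    (hsep : ∀ a ∈ J, ∀ b : Set (ℕ → Bool), b ⊆ D → b ∉ J →
      ∃ n, a ∩ (c n ∩ D) = ∅ ∧ b ∩ (c n ∩ D) ∉ J) :
    (∀ x : ℕ → Bool,
      ({x} : Set (ℕ → Bool)) ∈ {A | IsCompact A ∧ ∃ a ∈ J, A ⊆ closure a}) ∧
    (∀ A B : Set (ℕ → Bool), A ⊆ B → IsCompact A →
      B ∈ {A | IsCompact A ∧ ∃ a ∈ J, A ⊆ closure a} →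
      A ∈ {A | IsCompact A ∧ ∃ a ∈ J, A ⊆ closure a}) ∧
    (∀ f : ℕ → Set (ℕ → Bool),
      (∀ n, f n ∈ {A | IsCompact A ∧ ∃ a ∈ J, A ⊆ closure a}) →
      IsCompact (⋃ n, f n) →
      (⋃ n, f n) ∈ {A | IsCompact A ∧ ∃ a ∈ J, A ⊆ closure a}) :=
  sigmaIdeal_of_compacts_from_ideal_general D hDd J hsub hdown hunion hsing hdense c hclop hsep
end

section
/- An ideal J on ω is weakly selective if and only if for every J-positive set b ⊆ ω, every tree T ⊆ b^{<ω} all of whose splitting sets are co-(J↾b) (i.e. b \ split_T(t) ∈ J for every t ∈ T) has a J-positive branch. -/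
open Set TopologicalSpace

/-- The splitting set of a node `t` in a tree `T` of finite sequences. -/
def splitT (T : Set (List ℕ)) (t : List ℕ) : Set ℕ := {n : ℕ | t ++ [n] ∈ T}

/-! Weak selectivity applied to "the first splitting set rejecting `n`" yields a positive `a ⊆ b`
meeting every `b \ split_T(t)` in a finite set; applied again to the block index of a fast enough
partition of `ω` into intervals, it thins `a` to a positive set so sparse that, above each of its
points `m`, it avoids everything rejected by nodes below `m`. Its increasing enumeration is then a
branch. Conversely, if all fibres of `f` are in `J`, the tree of sequences on which `f` is
one-to-one has co-`(J↾b)` splitting sets, and its positive branches are the sets sought. -/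

namespace IsIdeal

variable {α : Type*} {J : Set (Set α)}

lemma subset_mem (hJ : IsIdeal J) {a b : Set α} (hab : a ⊆ b) (hb : b ∈ J) : a ∈ J :=
  hJ.1 a b hab hb

lemma union_mem_s17 (hJ : IsIdeal J) {a b : Set α} (ha : a ∈ J) (hb : b ∈ J) : a ∪ b ∈ J :=
  hJ.2.1 a b ha hb

lemma empty_mem_s17 [Nonempty α] (hJ : IsIdeal J) : ∅ ∈ J :=
  hJ.subset_mem (empty_subset _) (hJ.2.2 (Classical.arbitrary α))

lemma biUnion_mem_s17 [Nonempty α] (hJ : IsIdeal J) {ι : Type*} {s : Set ι} (hs : s.Finite)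
    {F : ι → Set α} (hF : ∀ i ∈ s, F i ∈ J) : ⋃ i ∈ s, F i ∈ J := by
  induction s, hs using Set.Finite.induction_on with
  | empty => simpa using hJ.empty_mem_s17
  | @insert i s _ _ ih =>
    rw [biUnion_insert]
    exact hJ.union_mem_s17 (hF i (mem_insert i s)) (ih fun j hj => hF j (mem_insert_of_mem i hj))

lemma mem_of_finite_s17 [Nonempty α] (hJ : IsIdeal J) {s : Set α} (hs : s.Finite) : s ∈ J := by
  simpa using hJ.biUnion_mem_s17 hs fun x _ => hJ.2.2 x

lemma sep_notMem_or (hJ : IsIdeal J) {a : Set α} (ha : a ∉ J) (p : α → Prop) :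
    {x ∈ a | p x} ∉ J ∨ {x ∈ a | ¬p x} ∉ J := by
  by_contra! h
  refine ha (hJ.subset_mem (fun x hx => ?_) (hJ.union_mem_s17 h.1 h.2))
  by_cases hp : p x
  exacts [Or.inl ⟨hx, hp⟩, Or.inr ⟨hx, hp⟩]

end IsIdeal

lemma List.finite_setOf_length_le_forall_le (N m : ℕ) :
    {l : List ℕ | l.length ≤ N ∧ ∀ i ∈ l, i ≤ m}.Finite := by
  refine ((List.finite_length_le (Iic m) N).image (List.map Subtype.val)).subset ?_
  rintro l ⟨hlen, hle⟩
  lift l to List (Iic m) using hle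
  exact ⟨l, by simpa using hlen, rfl⟩

lemma List.exists_bound_of_forall_finite (φ : List ℕ → Set ℕ) (hφ : ∀ t, (φ t).Finite) :
    ∃ K : ℕ → ℕ, ∀ m t, t.length ≤ m + 1 → (∀ i ∈ t, i ≤ m) → ∀ n ∈ φ t, n ≤ K m := by
  have hbdd : ∀ m, BddAbove (⋃ t ∈ {t : List ℕ | t.length ≤ m + 1 ∧ ∀ i ∈ t, i ≤ m}, φ t) :=
    fun m => ((finite_setOf_length_le_forall_le _ m).biUnion fun t _ => hφ t).bddAbove
  choose K hK using hbdd
  exact ⟨K, fun m t hlen hle n hn => hK m (mem_biUnion (show t ∈ _ from ⟨hlen, hle⟩) hn)⟩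

lemma List.ofFn_mem_of_append_mem {α : Type*} {T : Set (List α)} {x : ℕ → α} (hnil : [] ∈ T)
    (hstep : ∀ k, (List.ofFn fun i : Fin k => x i) ∈ T →
      (List.ofFn fun i : Fin k => x i) ++ [x k] ∈ T) (k : ℕ) :
    (List.ofFn fun i : Fin k => x i) ∈ T := by
  induction k with
  | zero => simpa using hnil
  | succ k ih =>
    rw [List.ofFn_succ', List.concat_eq_append]
    exact hstep k ih

lemma StrictMono.exists_le_lt_succ {c : ℕ → ℕ} (hc : StrictMono c) (h0 : c 0 = 0) (n : ℕ) :
    ∃ j, c j ≤ n ∧ n < c (j + 1) := by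
  have hex : ∃ j, n < c (j + 1) := ⟨n, hc.id_le (n + 1)⟩
  refine ⟨Nat.find hex, ?_, Nat.find_spec hex⟩
  rcases h : Nat.find hex with _ | j
  · simp [h0]
  · exact not_lt.1 (Nat.find_min hex (h ▸ j.lt_succ_self))

namespace WeaklySelective

variable {J : Set (Set ℕ)}

lemma exists_subset_inter_finite (hJ : IsIdeal J) (hWS : WeaklySelective J) {b : Set ℕ}
    (hb : b ∉ J) {ι : Type*} [Countable ι] (R : ι → Set ℕ) (hR : ∀ i, R i ∈ J) :
    ∃ a ⊆ b, a ∉ J ∧ ∀ i, (a ∩ R i).Finite := by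
  rcases isEmpty_or_nonempty ι with _ | _
  · exact ⟨b, subset_rfl, hb, isEmptyElim⟩
  obtain ⟨g, hg⟩ := exists_surjective_nat ι
  obtain hcov | hfree := hJ.sep_notMem_or hb (· ∈ ⋃ k, R (g k))
  · let first : ℕ → ℕ := fun n => sInf {k | n ∈ R (g k)}
    obtain ⟨a, hab, ha, hinj | ⟨c, hc⟩⟩ := hWS _ hcov first
    · refine ⟨a, hab.trans (sep_subset _ _), ha, fun i => ?_⟩
      obtain ⟨k, rfl⟩ := hg i
      refine Finite.of_finite_image ((finite_Iic k).subset ?_) (hinj.mono inter_subset_left)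
      rintro _ ⟨n, ⟨-, hn⟩, rfl⟩
      exact Nat.sInf_le hn
    · refine absurd (hJ.subset_mem (fun n hn => ?_) (hR (g c))) ha
      rw [← hc n hn]
      exact Nat.sInf_mem (mem_iUnion.1 (hab hn).2)
  · refine ⟨_, sep_subset _ _, hfree, fun i => ?_⟩
    obtain ⟨k, rfl⟩ := hg i
    exact finite_empty.subset fun n ⟨⟨_, hn⟩, hnk⟩ => hn (mem_iUnion.2 ⟨k, hnk⟩)

lemma exists_sparse_subset (hJ : IsIdeal J) (hWS : WeaklySelective J) {b : Set ℕ} (hb : b ∉ J)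
    (K : ℕ → ℕ) : ∃ a ⊆ b, a ∉ J ∧ ∀ m ∈ a, ∀ n ∈ a, m < n → K m < n := by
  -- `K` maps the block `[c j, c (j + 1))` below `c (j + 2)`, so points of distinct blocks whose
  -- indices have equal parity are `K`-separated
  let c : ℕ → ℕ := fun j => Nat.rec 0 (fun _ cj => cj + (Finset.range (cj + 1)).sup K + 1) j
  have c_succ : ∀ j, c (j + 1) = c j + (Finset.range (c j + 1)).sup K + 1 := fun _ => rfl
  have hc : StrictMono c := strictMono_nat_of_lt_succ fun j => by rw [c_succ]; omega
  choose blk hblk using hc.exists_le_lt_succ rfl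
  obtain ⟨a, hab, ha, hinj | ⟨j, hj⟩⟩ := hWS b hb blk
  · obtain ⟨p, hp⟩ : ∃ p, {n ∈ a | blk n % 2 = p} ∉ J := by
      rcases hJ.sep_notMem_or ha (fun n => blk n % 2 = 0) with h | h
      exacts [⟨0, h⟩, ⟨1, by simpa using h⟩]
    refine ⟨_, (sep_subset _ _).trans hab, hp, fun m hm n hn hmn => ?_⟩
    have hblk_le : blk m ≤ blk n := by
      by_contra! h
      have := hc.monotone (Nat.succ_le_of_lt h)
      linarith [(hblk m).1, (hblk n).2]
    have hblk_ne : blk m ≠ blk n := fun h => hmn.ne (hinj hm.1 hn.1 h)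
    have hskip : blk m + 2 ≤ blk n := by have := hm.2.trans hn.2.symm; omega
    calc K m ≤ (Finset.range (c (blk m + 1) + 1)).sup K :=
          Finset.le_sup (Finset.mem_range.2 (by linarith [(hblk m).2]))
      _ < c (blk m + 2) := by rw [c_succ (blk m + 1)]; omega
      _ ≤ c (blk n) := hc.monotone hskip
      _ ≤ n := (hblk n).1
  · refine absurd (hJ.mem_of_finite_s17 ((finite_Iio (c (j + 1))).subset fun n hn => ?_)) ha
    simpa [hj n hn] using (hblk n).2

theorem exists_positive_branch (hJ : IsIdeal J) (hWS : WeaklySelective J) {b : Set ℕ}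
    (hb : b ∉ J) {T : Set (List ℕ)} (hnil : [] ∈ T) (hsplit : ∀ t ∈ T, b \ splitT T t ∈ J) :
    ∃ x : ℕ → ℕ, (∀ k, (List.ofFn fun i : Fin k => x i) ∈ T) ∧ range x ∉ J := by
  obtain ⟨a, hab, ha, hfin⟩ :=
    exists_subset_inter_finite hJ hWS hb (fun t : T => b \ splitT T t) fun t => hsplit t t.2
  obtain ⟨K, hK⟩ := List.exists_bound_of_forall_finite (fun t => {n ∈ a | t ∈ T ∧ n ∉ splitT T t})
    fun t => by
      by_cases ht : t ∈ T
      · exact (hfin ⟨t, ht⟩).subset fun n hn => ⟨hn.1, hab hn.1, hn.2.2⟩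
      · exact finite_empty.subset fun n hn => ht hn.2.1
  obtain ⟨a', ha'a, ha', hsparse⟩ := exists_sparse_subset hJ hWS ha K
  set A := {n ∈ a' | K 0 < n}
  have hA : A ∉ J := (hJ.sep_notMem_or ha' _).resolve_right fun h =>
    h (hJ.mem_of_finite_s17 ((finite_Iic (K 0)).subset fun n hn => not_lt.1 hn.2))
  have hAinf : A.Infinite := fun h => hA (hJ.mem_of_finite_s17 h)
  set x := Nat.nth (· ∈ A)
  have hx : StrictMono x := Nat.nth_strictMono hAinf
  have hxA : ∀ k, x k ∈ A := Nat.nth_mem_of_infinite hAinf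
  have hrange : range x = A := Nat.range_nth_of_infinite hAinf
  refine ⟨x, List.ofFn_mem_of_append_mem hnil fun k ht => ?_, hrange ▸ hA⟩
  by_contra hrej
  have hrej' : x k ∈ {n ∈ a | _ ∈ T ∧ n ∉ splitT T _} := ⟨ha'a (hxA k).1, ht, hrej⟩
  cases k with
  | zero => exact (hxA 0).2.not_ge (hK 0 [] (by simp) (by simp) _ hrej')
  | succ j =>
    have hlen : j + 1 ≤ x j + 1 := Nat.succ_le_succ (hx.id_le j)
    have hle : ∀ i ∈ List.ofFn fun i : Fin (j + 1) => x i, i ≤ x j := by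
      simp only [List.mem_ofFn, forall_exists_index]
      rintro _ i rfl
      exact hx.monotone (Fin.is_le i)
    exact (hsparse _ (hxA j).1 _ (hxA (j + 1)).1 (hx j.lt_succ_self)).not_ge
      (hK (x j) _ (by simpa using hlen) hle _ hrej')

end WeaklySelective

lemma Function.injective_of_forall_nodup_ofFn {α : Type*} {g : ℕ → α}
    (hg : ∀ k, (List.ofFn fun i : Fin k => g i).Nodup) : Function.Injective g := by
  intro i j hij
  simpa using List.nodup_ofFn.1 (hg (max i j + 1)) (a₁ := ⟨i, by omega⟩) (a₂ := ⟨j, by omega⟩) hij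

theorem weaklySelective_of_forall_exists_positive_branch {J : Set (Set ℕ)} (hJ : IsIdeal J)
    (h : ∀ b : Set ℕ, b ∉ J →
        ∀ T : Set (List ℕ),
          (∀ t ∈ T, ∀ s : List ℕ, s <+: t → s ∈ T) →
          ([] : List ℕ) ∈ T →
          (∀ t ∈ T, ∀ n ∈ t, n ∈ b) →
          (∀ t ∈ T, b \ splitT T t ∈ J) →
          ∃ x : ℕ → ℕ, (∀ n : ℕ, (List.ofFn fun i : Fin n => x i) ∈ T) ∧
            Set.range x ∉ J) :
    WeaklySelective J := by
  intro b hb f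
  by_cases hfib : ∀ c, {n ∈ b | f n = c} ∈ J
  swap
  · obtain ⟨c, hc⟩ := not_forall.1 hfib
    exact ⟨_, sep_subset _ _, hc, Or.inr ⟨c, fun n hn => hn.2⟩⟩
  -- a node `t` rejects only points of the finitely many fibres of `f` through `t`
  let T := {t : List ℕ | (∀ n ∈ t, n ∈ b) ∧ (t.map f).Nodup}
  have hprefix : ∀ t ∈ T, ∀ s : List ℕ, s <+: t → s ∈ T := fun t ht s hst =>
    ⟨fun n hn => ht.1 n (hst.subset hn), ht.2.sublist (hst.sublist.map f)⟩
  have hsplit : ∀ t ∈ T, b \ splitT T t ∈ J := by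
    intro t ht
    refine hJ.subset_mem ?_ (hJ.biUnion_mem_s17 t.finite_toSet fun m _ => hfib (f m))
    rintro n ⟨hnb, hn⟩
    obtain ⟨m, hm, hfm⟩ := List.mem_map.1 <| show f n ∈ t.map f by
      by_contra hnew
      refine hn ⟨fun k hk => ?_, ?_⟩
      · rcases List.mem_append.1 hk with hk | hk
        exacts [ht.1 k hk, List.mem_singleton.1 hk ▸ hnb]
      · rw [← List.concat_eq_append, List.map_concat, List.nodup_concat]
        exact ⟨hnew, ht.2⟩
    exact mem_biUnion hm ⟨hnb, hfm.symm⟩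
  obtain ⟨x, hxT, hx⟩ := h b hb T hprefix ⟨by simp, by simp⟩ (fun t ht => ht.1) hsplit
  have hinj : Function.Injective (f ∘ x) :=
    Function.injective_of_forall_nodup_ofFn fun k => by
      simpa [List.map_ofFn, Function.comp_def] using (hxT k).2
  refine ⟨range x, ?_, hx, Or.inl ?_⟩
  · rintro _ ⟨n, rfl⟩
    exact (hxT (n + 1)).1 _ (List.mem_ofFn.2 ⟨Fin.last n, rfl⟩)
  · rintro _ ⟨i, rfl⟩ _ ⟨j, rfl⟩ hij
    rw [hinj hij]

/-- Lemma (Grigorieff-style characterization): `J` is weakly selective iff for every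
`J`-positive `b`, every nonempty tree `T ⊆ b^{<ω}` all of whose splitting sets are
co-`(J↾b)` has a `J`-positive branch. -/
theorem weaklySelective_iff_coSplitting_trees_have_positive_branch
    (J : Set (Set ℕ)) (hJ : IsIdeal J) :
    WeaklySelective J ↔
      ∀ b : Set ℕ, b ∉ J →
        ∀ T : Set (List ℕ),
          (∀ t ∈ T, ∀ s : List ℕ, s <+: t → s ∈ T) →
          ([] : List ℕ) ∈ T →
          (∀ t ∈ T, ∀ n ∈ t, n ∈ b) →
          (∀ t ∈ T, b \ splitT T t ∈ J) →
          ∃ x : ℕ → ℕ, (∀ n : ℕ, (List.ofFn fun i : Fin n => x i) ∈ T) ∧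
            Set.range x ∉ J :=
  ⟨fun hWS _ hb _ _ hnil _ hsplit => hWS.exists_positive_branch hJ hb hnil hsplit,
    weaklySelective_of_forall_exists_positive_branch hJ⟩
end
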